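/- arXiv:2008.13232 — 6 statements merged into one kernel-verified Lean document; each statement's English description precedes it below -/
import Mathlib

section
/- Let α = (α₁,…,α_s) be a composition with s odd. Then the rank generating function satisfies r(q;α) = r(q; α₁,…,α_{s−1}, α_s − 1) + q^{α_s+1} · r(q; α₁,…,α_{s−2}, α_{s−1} − 1), where by convention F(α₁,…,α_{s−1},0) = F(α₁,…,α_{s−1}). -/
open Polynomial

/-- The order relation of the fence poset `F(α)` on positions `0,…,α.sum`
(position `p` corresponds to the element `x_{p+1}`).  Segment `j` (0-indexed)
occupies positions `(α.take j).sum` through `(α.take (j+1)).sum`; even-indexed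
segments are ascending and odd-indexed segments are descending. -/
def fenceLe (α : List ℕ) (p q : ℕ) : Prop :=
  p = q ∨ ∃ j < α.length,
    if j % 2 = 0 then
      (α.take j).sum ≤ p ∧ p ≤ q ∧ q ≤ (α.take (j + 1)).sum
    else
      (α.take j).sum ≤ q ∧ q ≤ p ∧ p ≤ (α.take (j + 1)).sum

/-- `I` is a lower order ideal of the fence `F(α)`. -/
def IsFenceIdeal (α : List ℕ) (I : Finset (Fin (α.sum + 1))) : Prop :=
  ∀ p q : Fin (α.sum + 1), fenceLe α p q → q ∈ I → p ∈ I

/-- The number of lower order ideals of `F(α)` of cardinality `k`,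
i.e. the size of the `k`-th rank of the distributive lattice `L(α)`. -/
noncomputable def fenceRk (α : List ℕ) (k : ℕ) : ℕ :=
  Nat.card {I : Finset (Fin (α.sum + 1)) // IsFenceIdeal α I ∧ I.card = k}

/-- The rank generating function `r(q;α)` of `L(α)`. -/
noncomputable def rpoly (α : List ℕ) : Polynomial ℕ :=
  ∑ k ∈ Finset.range (α.sum + 2), Polynomial.C (fenceRk α k) * Polynomial.X ^ k

/-- Deletion of a trailing `0` part: the convention `F(α₁,…,α_{s-1},0) = F(α₁,…,α_{s-1})`. -/
def normComp (l : List ℕ) : List ℕ :=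
  if l.getLast? = some 0 then l.dropLast else l

/-! The top position `N` of `F(γ ++ [b, a])` is maximal: since the number of segments is odd, the
last segment is an ascending chain `M < ⋯ < N` starting at the valley `M = γ.sum + b`. An ideal
avoiding `N` is exactly an ideal of the fence whose last segment is shorter by one. An ideal
containing `N` contains the whole chain, which is closed downwards because the valley lies below
both of its neighbouring segments; removing these `a + 1` elements leaves an ideal of the fence on
the positions `< M`, namely `F(γ ++ [b - 1])`. -/

lemma List.sum_take_le_sum (l : List ℕ) (j : ℕ) : (l.take j).sum ≤ l.sum :=
  l.sum_take_add_sum_drop j ▸ Nat.le_add_right _ _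

lemma sum_take_append_singleton (l : List ℕ) (x j : ℕ) :
    ((l ++ [x]).take j).sum = if j ≤ l.length then (l.take j).sum else l.sum + x := by
  split_ifs with h
  · rw [List.take_append_of_le_length h]
  · rw [List.take_of_length_le (by simp; omega), List.sum_append, List.sum_singleton]

theorem fenceLe.eq_or_le_sum {l : List ℕ} {p q : ℕ} (h : fenceLe l p q) :
    p = q ∨ p ≤ l.sum ∧ q ≤ l.sum := by
  obtain h | ⟨j, -, hj⟩ := h
  · exact .inl h
  have := l.sum_take_le_sum (j + 1)
  split_ifs at hj <;> omega

theorem fenceLe_append_singleton {l : List ℕ} {x p q : ℕ} :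
    fenceLe (l ++ [x]) p q ↔ fenceLe l p q ∨
      if l.length % 2 = 0 then l.sum ≤ p ∧ p ≤ q ∧ q ≤ l.sum + x
      else l.sum ≤ q ∧ q ≤ p ∧ p ≤ l.sum + x := by
  simp only [fenceLe, List.length_append, List.length_singleton, Nat.exists_lt_succ_right,
    sum_take_append_singleton, le_refl, if_true, Nat.not_succ_le_self, if_false,
    List.take_length, or_assoc]
  refine or_congr_right (or_congr_left (exists_congr fun j => and_congr_right fun hj => ?_))
  rw [if_pos hj.le, if_pos (show j + 1 ≤ l.length from hj)]

theorem fenceLe_append_zero (l : List ℕ) : fenceLe (l ++ [0]) = fenceLe l := by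
  ext p q
  rw [fenceLe_append_singleton, or_iff_left_iff_imp]
  intro h
  exact .inl (by split_ifs at h <;> omega)

theorem fenceLe_normComp (l : List ℕ) : fenceLe (normComp l) = fenceLe l := by
  unfold normComp
  split_ifs with h
  · conv_rhs => rw [← List.dropLast_append_getLast? 0 h]
    rw [fenceLe_append_zero]
  · rfl

theorem sum_normComp (l : List ℕ) : (normComp l).sum = l.sum := by
  unfold normComp
  split_ifs with h
  · conv_rhs => rw [← List.dropLast_append_getLast? 0 h]
    simp
  · rfl

theorem fenceLe_append_singleton_congr {l : List ℕ} {x y p q : ℕ}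
    (hp : p ≤ l.sum + min x y) (hq : q ≤ l.sum + min x y) :
    fenceLe (l ++ [x]) p q ↔ fenceLe (l ++ [y]) p q := by
  simp only [fenceLe_append_singleton]
  refine or_congr_right ?_
  split_ifs <;> omega

theorem fenceLe_append_singleton_iff_of_le_sum {l : List ℕ} {x p q : ℕ}
    (hp : p ≤ l.sum) (hq : q ≤ l.sum) : fenceLe (l ++ [x]) p q ↔ fenceLe l p q := by
  rw [fenceLe_append_singleton_congr (y := 0) (by omega) (by omega), fenceLe_append_zero]

section AscendingLast

variable {l : List ℕ} (hl : Even l.length) {a p q : ℕ}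
include hl

theorem fenceLe.le_max_sum_of_even (h : fenceLe (l ++ [a]) p q) : p ≤ max q l.sum := by
  rw [fenceLe_append_singleton, if_pos (Nat.even_iff.mp hl)] at h
  obtain h | h := h
  · obtain h | h := h.eq_or_le_sum <;> omega
  · omega

theorem fenceLe_append_sum_of_even (hp : l.sum ≤ p) (hpa : p ≤ l.sum + a) :
    fenceLe (l ++ [a]) p (l.sum + a) := by
  rw [fenceLe_append_singleton, if_pos (Nat.even_iff.mp hl)]
  exact .inr ⟨hp, hpa, le_rfl⟩

theorem fenceLe_append_pred_iff_of_even (ha : 0 < a) (hq : q < l.sum + a) :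
    fenceLe (l ++ [a]) p q ↔ fenceLe (l ++ [a - 1]) p q := by
  by_cases hp : p < l.sum + a
  · exact fenceLe_append_singleton_congr (by omega) (by omega)
  refine iff_of_false (fun h => ?_) (fun h => ?_)
  · have := h.le_max_sum_of_even hl
    omega
  · have := h.eq_or_le_sum
    rw [List.sum_append, List.sum_singleton] at this
    omega

end AscendingLast

theorem fenceLe.sum_add_le_of_sum_add_le {γ : List ℕ} {b a p q : ℕ} (hγ : Odd γ.length)
    (hb : 0 < b) (hq : γ.sum + b ≤ q) (h : fenceLe (γ ++ [b] ++ [a]) p q) : γ.sum + b ≤ p := by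
  have hγ' : γ.length % 2 = 1 := Nat.odd_iff.mp hγ
  have hγb : (γ ++ [b]).length % 2 = 0 := by
    rw [List.length_append, List.length_singleton]
    omega
  rw [fenceLe_append_singleton, if_pos hγb, List.sum_append, List.sum_singleton] at h
  obtain h | h := h
  · rw [fenceLe_append_singleton, if_neg (by omega)] at h
    obtain h | h := h
    · obtain h | h := h.eq_or_le_sum <;> omega
    · omega
  · omega

open Finset

open Classical in
noncomputable def fenceIdeals (l : List ℕ) : Finset (Finset ℕ) :=
  {I ∈ (range (l.sum + 1)).powerset | ∀ p q, fenceLe l p q → q ∈ I → p ∈ I}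

theorem mem_fenceIdeals {l : List ℕ} {I : Finset ℕ} :
    I ∈ fenceIdeals l ↔ I ⊆ range (l.sum + 1) ∧ ∀ p q, fenceLe l p q → q ∈ I → p ∈ I := by
  simp only [fenceIdeals, mem_filter, mem_powerset]

theorem fenceRk_eq_card (l : List ℕ) (k : ℕ) :
    fenceRk l k = #{I ∈ fenceIdeals l | #I = k} := by
  classical
  rw [fenceRk, Nat.card_eq_fintype_card, Fintype.card_subtype]
  refine card_bij (fun I _ => I.image Fin.val) (fun I hI => ?_)
    (fun I _ J _ h => image_injective Fin.val_injective h) (fun I hI => ?_)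
  · obtain ⟨hideal, hk⟩ := (mem_filter.1 hI).2
    refine mem_filter.2 ⟨mem_fenceIdeals.2 ⟨fun x hx => ?_, fun p q hpq hq => ?_⟩,
      (card_image_of_injective _ Fin.val_injective).trans hk⟩
    · obtain ⟨y, -, rfl⟩ := mem_image.1 hx
      exact mem_range.2 y.2
    · obtain ⟨y, hy, rfl⟩ := mem_image.1 hq
      have hp : p < l.sum + 1 := by obtain h | h := hpq.eq_or_le_sum <;> omega
      exact mem_image.2 ⟨⟨p, hp⟩, hideal _ _ hpq hy, rfl⟩
  · obtain ⟨hmem, rfl⟩ := mem_filter.1 hI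
    obtain ⟨hsub, hideal⟩ := mem_fenceIdeals.1 hmem
    have hlt : ∀ m ∈ I, m < l.sum + 1 := fun m hm => mem_range.1 (hsub hm)
    refine ⟨I.attachFin hlt, mem_filter.2 ⟨mem_univ _, fun p q hpq hq => ?_, card_attachFin _ _⟩,
      image_val_attachFin hlt⟩
    rw [mem_attachFin] at hq ⊢
    exact hideal p q hpq hq

theorem rpoly_eq_sum_fenceIdeals (l : List ℕ) : rpoly l = ∑ I ∈ fenceIdeals l, X ^ #I := by
  have hcard : ∀ I ∈ fenceIdeals l, #I ∈ range (l.sum + 2) := fun I hI =>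
    mem_range.2 (Nat.lt_succ_of_le (by simpa using card_le_card (mem_fenceIdeals.1 hI).1))
  rw [rpoly, ← sum_fiberwise_of_maps_to hcard]
  refine sum_congr rfl fun k _ => ?_
  rw [fenceRk_eq_card, C_mul', ← sum_const]
  exact sum_congr rfl fun I hI => by rw [(mem_filter.1 hI).2]

theorem rpoly_normComp (l : List ℕ) : rpoly (normComp l) = rpoly l := by
  rw [rpoly_eq_sum_fenceIdeals, rpoly_eq_sum_fenceIdeals, fenceIdeals, fenceIdeals,
    fenceLe_normComp, sum_normComp]

theorem filter_fenceIdeals_sum_not_mem {l l' : List ℕ} (hsum : l'.sum + 1 = l.sum)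
    (hagree : ∀ p q, q ≤ l'.sum → (fenceLe l p q ↔ fenceLe l' p q)) :
    {I ∈ fenceIdeals l | l.sum ∉ I} = fenceIdeals l' := by
  ext I
  simp only [mem_filter, mem_fenceIdeals]
  constructor
  · rintro ⟨⟨hsub, hI⟩, htop⟩
    have hsub' : I ⊆ range (l'.sum + 1) := fun x hx => by
      have := mem_range.1 (hsub hx)
      have : x ≠ l.sum := fun h => htop (h ▸ hx)
      rw [mem_range]
      omega
    refine ⟨hsub', fun p q hpq hq => hI p q ((hagree p q ?_).2 hpq) hq⟩
    have := mem_range.1 (hsub' hq)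
    omega
  · rintro ⟨hsub, hI⟩
    refine ⟨⟨hsub.trans (range_subset_range.2 (by omega)),
      fun p q hpq hq => hI p q ((hagree p q ?_).1 hpq) hq⟩, fun h => ?_⟩
    · have := mem_range.1 (hsub hq)
      omega
    · have := mem_range.1 (hsub h)
      omega

section TopBlock

variable {l l' : List ℕ} (hs : l'.sum < l.sum)
  (hagree : ∀ p q, p ≤ l'.sum → q ≤ l'.sum → (fenceLe l p q ↔ fenceLe l' p q))
  (hbelow : ∀ p q, q ≤ l'.sum → fenceLe l p q → p ≤ l'.sum + 1)
  (habove : ∀ p q, l'.sum < q → fenceLe l p q → l'.sum < p)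
  (htop : ∀ p, l'.sum < p → p ≤ l.sum → fenceLe l p l.sum)
include hs hagree hbelow habove htop

theorem filter_fenceIdeals_sum_mem :
    {I ∈ fenceIdeals l | l.sum ∈ I} = (fenceIdeals l').image (· ∪ Ioc l'.sum l.sum) := by
  ext I
  simp only [mem_filter, mem_fenceIdeals, mem_image]
  constructor
  · rintro ⟨⟨hsub, hI⟩, hN⟩
    refine ⟨I \ Ioc l'.sum l.sum, ⟨fun x hx => ?_, fun p q hpq hq => ?_⟩,
      sdiff_union_of_subset fun x hx => ?_⟩
    · obtain ⟨hxI, hx⟩ := mem_sdiff.1 hx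
      have := mem_range.1 (hsub hxI)
      rw [mem_Ioc] at hx
      rw [mem_range]
      omega
    · rw [mem_sdiff, mem_Ioc] at hq ⊢
      have hq' : q ≤ l'.sum := by
        have := mem_range.1 (hsub hq.1)
        omega
      have hp' : p ≤ l'.sum := by obtain h | h := hpq.eq_or_le_sum <;> omega
      exact ⟨hI p q ((hagree p q hp' hq').2 hpq) hq.1, by omega⟩
    · obtain ⟨h1, h2⟩ := mem_Ioc.1 hx
      exact hI x l.sum (htop x h1 h2) hN
  · rintro ⟨J, ⟨hsub, hJ⟩, rfl⟩
    have hJ' : ∀ x ∈ J, x ≤ l'.sum := fun x hx => Nat.lt_succ_iff.1 (mem_range.1 (hsub hx))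
    refine ⟨⟨fun x hx => ?_, fun p q hpq hq => ?_⟩, mem_union_right _ (mem_Ioc.2 ⟨hs, le_rfl⟩)⟩
    · rw [mem_union, mem_Ioc] at hx
      rw [mem_range]
      obtain hx | hx := hx
      · have := hJ' x hx
        omega
      · omega
    · rw [mem_union, mem_Ioc] at hq ⊢
      obtain hq | hq := hq
      · have hq' := hJ' q hq
        have := hbelow p q hq' hpq
        by_cases hp : p ≤ l'.sum
        · exact .inl (hJ p q ((hagree p q hp hq').1 hpq) hq)
        · right
          omega
      · have := habove p q hq.1 hpq
        have hpN : p ≤ l.sum := by obtain h | h := hpq.eq_or_le_sum <;> omega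
        right
        omega

theorem sum_filter_fenceIdeals_sum_mem :
    ∑ I ∈ fenceIdeals l with l.sum ∈ I, X ^ #I = X ^ (l.sum - l'.sum) * rpoly l' := by
  have hdisj : ∀ J ∈ fenceIdeals l', Disjoint J (Ioc l'.sum l.sum) := fun J hJ =>
    disjoint_left.2 fun x hx hx' => by
      have := mem_range.1 ((mem_fenceIdeals.1 hJ).1 hx)
      rw [mem_Ioc] at hx'
      omega
  rw [filter_fenceIdeals_sum_mem hs hagree hbelow habove htop, sum_image, rpoly_eq_sum_fenceIdeals,
    mul_sum]
  · refine sum_congr rfl fun J hJ => ?_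
    rw [card_union_of_disjoint (hdisj J hJ), Nat.card_Ioc, pow_add, mul_comm]
  · intro J hJ J' hJ' h
    rw [← union_sdiff_cancel_right (hdisj J hJ), ← union_sdiff_cancel_right (hdisj J' hJ')]
    exact congrArg (· \ Ioc l'.sum l.sum) h

end TopBlock

/-- Here `α = γ ++ [b, a]`, so `b = α_{s-1}` and `a = α_s`. -/
theorem rpoly_rec_odd_general (γ : List ℕ) (b a : ℕ)
    (hb : 0 < b) (ha : 0 < a) (hodd : Odd (γ ++ [b, a]).length) :
    rpoly (γ ++ [b, a]) =
      rpoly (normComp (γ ++ [b, a - 1])) +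
        Polynomial.X ^ (a + 1) * rpoly (normComp (γ ++ [b - 1])) := by
  have hγodd : Odd γ.length := by simpa [Nat.odd_add] using hodd
  have hL : Even (γ ++ [b]).length := by simpa [Nat.even_add_one] using hγodd
  have hsum : ∀ (l : List ℕ) x, (l ++ [x]).sum = l.sum + x := by simp
  have hLsum := hsum γ b
  have hexp : (γ ++ [b] ++ [a]).sum - (γ ++ [b - 1]).sum = a + 1 := by simp only [hsum]; omega
  rw [rpoly_normComp, rpoly_normComp, show γ ++ [b, a] = γ ++ [b] ++ [a] by simp,
    show γ ++ [b, a - 1] = γ ++ [b] ++ [a - 1] by simp, rpoly_eq_sum_fenceIdeals,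
    ← sum_filter_not_add_sum_filter _ (fun I => (γ ++ [b] ++ [a]).sum ∈ I), ← hexp]
  congr 1
  · rw [filter_fenceIdeals_sum_not_mem (l' := γ ++ [b] ++ [a - 1]), ← rpoly_eq_sum_fenceIdeals]
    · simp only [hsum]; omega
    · intro p q hq
      simp only [hsum] at hq
      exact fenceLe_append_pred_iff_of_even hL ha (by omega)
  · apply sum_filter_fenceIdeals_sum_mem
    all_goals simp only [hsum]
    case hs => omega
    case hagree =>
      intro p q hp hq
      rw [fenceLe_append_singleton_iff_of_le_sum (by omega) (by omega)]
      exact fenceLe_append_singleton_congr (by omega) (by omega)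
    case hbelow => exact fun p q hq h => by have := h.le_max_sum_of_even hL; omega
    case habove =>
      exact fun p q hq h => by have := h.sum_add_le_of_sum_add_le hγodd hb (by omega); omega
    case htop =>
      exact fun p hp hpN => hLsum ▸ fenceLe_append_sum_of_even hL (by omega) (by omega)

/-- The recursion for the rank generating function when the number of segments is odd:
`r(q;α) = r(q;α₁,…,α_{s-1},α_s-1) + q^{α_s+1}·r(q;α₁,…,α_{s-2},α_{s-1}-1)`.
Here `α = γ ++ [b, a]`, so `b = α_{s-1}` and `a = α_s`. -/
theorem rpoly_rec_odd (γ : List ℕ) (b a : ℕ) (hγ : ∀ x ∈ γ, 0 < x)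
    (hb : 0 < b) (ha : 0 < a) (hodd : Odd (γ ++ [b, a]).length) :
    rpoly (γ ++ [b, a]) =
      rpoly (normComp (γ ++ [b, a - 1])) +
        Polynomial.X ^ (a + 1) * rpoly (normComp (γ ++ [b - 1])) :=
  rpoly_rec_odd_general γ b a hb ha hodd
end

section
/- If α = (α₁,…,α_s) is a composition with α_s ≥ α₁ + α₂ + ⋯ + α_{s−1}, then the rank generating function r(q;α) of the lattice of order ideals of the fence F(α) is unimodal. -/
open Polynomial

/-- A sequence of natural numbers (indexed by `ℕ`) is unimodal. -/
def SeqUnimodal (r : ℕ → ℕ) : Prop :=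
  ∃ m : ℕ, ∀ i j : ℕ, i ≤ j → (j ≤ m → r i ≤ r j) ∧ (m ≤ i → r j ≤ r i)

/-!
In `F(β ++ [a])` the last segment is a chain `e₀ < e₁ < ⋯ < e_a`, and every order ideal `I`
meets it in an initial piece `e₀, …, e_{t-1}` (`t = lastCount β a I`). When all parts of `β`
are positive, the point where the chain is glued to `F(β)` is a minimum of the fence if it is
`e₀` and a maximum if it is `e_a`; hence the down-set of `e_t` for `t < a` and the up-set of
`e_t` for `t ≥ 1` stay inside the chain. So `I ∪ {e_t}` is an ideal when `t < a`, and
`I \ {e_{t-1}}` is one when `t ≥ 2`; these two operations are mutually inverse. An ideal of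
size `k < a` has `t ≤ k < a`, and an ideal of size `k + 1 > β.sum + 1` has at most `β.sum`
points off the chain, so `t ≥ 2`. This gives `r_k ≤ r_{k+1}` for `k < a` and
`r_{k+1} ≤ r_k` for `k > β.sum`; when `β.sum ≤ a` the sequence therefore rises up to `a` and
falls from `a + 1` on.
-/

open Finset

theorem seqUnimodal_of_monotoneOn_of_antitoneOn {r : ℕ → ℕ} {m : ℕ}
    (hmono : MonotoneOn r (Set.Iic m)) (hanti : AntitoneOn r (Set.Ici m)) : SeqUnimodal r :=
  ⟨m, fun _ _ hij => ⟨fun hj => hmono (hij.trans hj) hj hij, fun hi => hanti hi (hi.trans hij) hij⟩⟩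

theorem monotoneOn_nat_Iic_of_le_succ {r : ℕ → ℕ} {m : ℕ} (hr : ∀ k < m, r k ≤ r (k + 1)) :
    MonotoneOn r (Set.Iic m) :=
  monotoneOn_of_le_succ Set.ordConnected_Iic fun k _ _ hk => hr k (Order.succ_le_iff.mp hk)

theorem seqUnimodal_of_le_succ_of_succ_le {r : ℕ → ℕ} {m : ℕ}
    (hup : ∀ k < m, r k ≤ r (k + 1)) (hdown : ∀ k > m, r (k + 1) ≤ r k) : SeqUnimodal r := by
  rcases le_total (r (m + 1)) (r m) with hm | hm
  · refine seqUnimodal_of_monotoneOn_of_antitoneOn (monotoneOn_nat_Iic_of_le_succ hup)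
      (antitoneOn_nat_Ici_of_succ_le fun k hk => ?_)
    rcases hk.eq_or_lt with rfl | hk
    exacts [hm, hdown k hk]
  · refine seqUnimodal_of_monotoneOn_of_antitoneOn (m := m + 1)
      (monotoneOn_nat_Iic_of_le_succ fun k hk => ?_)
      (antitoneOn_nat_Ici_of_succ_le fun k hk => hdown k hk)
    rcases (Nat.lt_succ_iff.mp hk).eq_or_lt with rfl | hk
    exacts [hm, hup k hk]

theorem mem_iff_lt_card_of_isLowerSet {S : Finset ℕ} (hS : IsLowerSet (S : Set ℕ)) {i : ℕ} :
    i ∈ S ↔ i < #S := by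
  constructor
  · intro hi
    have : range (i + 1) ⊆ S := fun j hj => hS (Nat.lt_succ_iff.mp (mem_range.mp hj)) hi
    simpa using card_le_card this
  · intro hi
    by_contra hiS
    have : S ⊆ range i := fun j hj =>
      mem_range.mpr (lt_of_not_ge fun hij => hiS (hS hij hj))
    exact absurd hi (not_lt.mpr (by simpa using card_le_card this))

namespace Fence

theorem sum_take_le_sum (β : List ℕ) (j : ℕ) : (β.take j).sum ≤ β.sum := by
  rw [← β.sum_take_add_sum_drop j]
  exact Nat.le_add_right _ _

theorem sum_take_lt_sum {β : List ℕ} (hβ : ∀ x ∈ β, 0 < x) {j : ℕ} (hj : j < β.length) :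
    (β.take j).sum < β.sum := by
  rw [← β.sum_take_add_sum_drop j]
  have hdrop : β.drop j ≠ [] := by simpa using hj
  have := List.sum_pos _ (fun x hx => hβ x (List.mem_of_mem_drop hx)) hdrop
  omega

theorem fenceLe_append_singleton {β : List ℕ} {a p q : ℕ} :
    fenceLe (β ++ [a]) p q ↔ fenceLe β p q ∨
      if β.length % 2 = 0 then β.sum ≤ p ∧ p ≤ q ∧ q ≤ β.sum + a
      else β.sum ≤ q ∧ q ≤ p ∧ p ≤ β.sum + a := by
  have htake : ∀ j ≤ β.length, (β ++ [a]).take j = β.take j :=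
    fun j hj => List.take_append_of_le_length hj
  have hlast : ((β ++ [a]).take (β.length + 1)).sum = β.sum + a := by simp
  constructor
  · rintro (rfl | ⟨j, hj, h⟩)
    · exact .inl (.inl rfl)
    rcases Nat.lt_succ_iff_lt_or_eq.mp (by simpa using hj) with hj | rfl
    · rw [htake j hj.le, htake (j + 1) hj] at h
      exact .inl (.inr ⟨j, hj, h⟩)
    · exact .inr (by rwa [htake _ le_rfl, List.take_length, hlast] at h)
  · rintro ((rfl | ⟨j, hj, h⟩) | h)
    · exact .inl rfl
    · refine .inr ⟨j, by simp; omega, ?_⟩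
      rwa [htake j hj.le, htake (j + 1) hj]
    · refine .inr ⟨β.length, by simp, ?_⟩
      rwa [htake _ le_rfl, List.take_length, hlast]

theorem eq_or_le_sum_of_fenceLe {β : List ℕ} {p q : ℕ} (h : fenceLe β p q) :
    p = q ∨ p ≤ β.sum ∧ q ≤ β.sum := by
  rcases h with h | ⟨j, -, h⟩
  · exact .inl h
  have := sum_take_le_sum β (j + 1)
  split_ifs at h <;> omega

theorem eq_sum_of_fenceLe_sum {β : List ℕ} (hβ : ∀ x ∈ β, 0 < x) (heven : β.length % 2 = 0)
    {p : ℕ} (h : fenceLe β p β.sum) : p = β.sum := by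
  rcases h with h | ⟨j, hj, h⟩
  · exact h
  rcases (show j + 1 ≤ β.length from hj).lt_or_eq with hlt | hlast
  · have := sum_take_lt_sum hβ hlt
    split_ifs at h <;> omega
  · rw [hlast, List.take_length] at h
    split_ifs at h <;> omega

theorem eq_sum_of_sum_fenceLe {β : List ℕ} (hβ : ∀ x ∈ β, 0 < x) (hodd : β.length % 2 = 1)
    {q : ℕ} (h : fenceLe β β.sum q) : q = β.sum := by
  rcases h with h | ⟨j, hj, h⟩
  · exact h.symm
  rcases (show j + 1 ≤ β.length from hj).lt_or_eq with hlt | hlast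
  · have := sum_take_lt_sum hβ hlt
    split_ifs at h <;> omega
  · rw [hlast, List.take_length] at h
    split_ifs at h <;> omega

variable {β : List ℕ} {a : ℕ}

/-- Position of `e_i`, the `i`-th lowest element of the last segment of `F(β ++ [a])`; the
segment ascends when `β` has even length and descends otherwise. -/
def lastPos (β : List ℕ) (a i : ℕ) : ℕ :=
  if β.length % 2 = 0 then β.sum + i else β.sum + a - i

theorem lastPos_le {i : ℕ} (hi : i ≤ a) : lastPos β a i ≤ β.sum + a := by
  unfold lastPos; split_ifs <;> omega

theorem eq_of_lastPos_eq {i j : ℕ} (hi : i ≤ a) (hj : j ≤ a)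
    (h : lastPos β a i = lastPos β a j) : i = j := by
  unfold lastPos at h; split_ifs at h <;> omega

theorem exists_eq_lastPos {x : ℕ} (h₁ : β.sum ≤ x) (h₂ : x ≤ β.sum + a) :
    ∃ i ≤ a, x = lastPos β a i := by
  unfold lastPos; split_ifs
  exacts [⟨x - β.sum, by omega, by omega⟩, ⟨β.sum + a - x, by omega, by omega⟩]

theorem fenceLe_lastPos {i j : ℕ} (hij : i ≤ j) (hj : j ≤ a) :
    fenceLe (β ++ [a]) (lastPos β a i) (lastPos β a j) := by
  refine fenceLe_append_singleton.mpr (.inr ?_)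
  unfold lastPos; split_ifs <;> omega

theorem exists_eq_lastPos_of_fenceLe (hβ : ∀ x ∈ β, 0 < x) {t p : ℕ} (ht : t < a)
    (h : fenceLe (β ++ [a]) p (lastPos β a t)) : ∃ i ≤ t, p = lastPos β a i := by
  rcases fenceLe_append_singleton.mp h with h | h
  · rcases eq_or_le_sum_of_fenceLe h with rfl | ⟨-, hle⟩
    · exact ⟨t, le_rfl, rfl⟩
    -- `lastPos t ≤ β.sum` only for the gluing point `e₀` of an ascending last segment
    unfold lastPos at h hle ⊢
    split_ifs at h hle ⊢ with heven
    · obtain rfl : t = 0 := by omega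
      exact ⟨0, le_rfl, eq_sum_of_fenceLe_sum hβ heven h⟩
    · omega
  · unfold lastPos at h ⊢
    split_ifs at h ⊢
    exacts [⟨p - β.sum, by omega, by omega⟩, ⟨β.sum + a - p, by omega, by omega⟩]

theorem exists_eq_lastPos_of_lastPos_fenceLe (hβ : ∀ x ∈ β, 0 < x) {t q : ℕ} (ht₁ : 1 ≤ t)
    (ht : t ≤ a) (h : fenceLe (β ++ [a]) (lastPos β a t) q) :
    ∃ i, t ≤ i ∧ i ≤ a ∧ q = lastPos β a i := by
  rcases fenceLe_append_singleton.mp h with h | h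
  · rcases eq_or_le_sum_of_fenceLe h with rfl | ⟨hle, -⟩
    · exact ⟨t, le_rfl, ht, rfl⟩
    -- `lastPos t ≤ β.sum` only for the gluing point `e_a` of a descending last segment
    unfold lastPos at h hle ⊢
    split_ifs at h hle ⊢ with heven
    · omega
    · obtain rfl : t = a := by omega
      refine ⟨t, le_rfl, le_rfl, ?_⟩
      simp only [Nat.add_sub_cancel] at h ⊢
      exact eq_sum_of_sum_fenceLe hβ (by omega) h
  · unfold lastPos at h ⊢
    split_ifs at h ⊢
    exacts [⟨q - β.sum, by omega, by omega, by omega⟩,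
      ⟨β.sum + a - q, by omega, by omega, by omega⟩]

/-- The `min` only matters (as a junk value) for `i > a`. -/
def lastElem (β : List ℕ) (a i : ℕ) : Fin ((β ++ [a]).sum + 1) :=
  ⟨min (lastPos β a i) (β ++ [a]).sum, Nat.lt_succ_of_le (min_le_right _ _)⟩

theorem val_lastElem {i : ℕ} (hi : i ≤ a) : (lastElem β a i : ℕ) = lastPos β a i :=
  min_eq_left (by simpa using lastPos_le hi)

theorem eq_lastElem_iff {i : ℕ} (hi : i ≤ a) {x : Fin ((β ++ [a]).sum + 1)} :
    x = lastElem β a i ↔ (x : ℕ) = lastPos β a i := by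
  rw [Fin.ext_iff, val_lastElem hi]

theorem eq_of_lastElem_eq {i j : ℕ} (hi : i ≤ a) (hj : j ≤ a)
    (h : lastElem β a i = lastElem β a j) : i = j :=
  eq_of_lastPos_eq hi hj (by rw [← val_lastElem hi, ← val_lastElem hj, h])

def lastCount (β : List ℕ) (a : ℕ) (I : Finset (Fin ((β ++ [a]).sum + 1))) : ℕ :=
  #{i ∈ range (a + 1) | lastElem β a i ∈ I}

variable {I : Finset (Fin ((β ++ [a]).sum + 1))}

theorem lastCount_le_succ : lastCount β a I ≤ a + 1 :=
  (card_filter_le _ _).trans (card_range _).le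

theorem lastCount_le_card : lastCount β a I ≤ #I :=
  card_le_card_of_injOn (lastElem β a) (fun _ hi => (mem_filter.mp hi).2)
    fun i hi j hj h => eq_of_lastElem_eq (by simp at hi; omega) (by simp at hj; omega) h

theorem lastCount_eq {n : ℕ} (hn : n ≤ a + 1) (h : ∀ i ≤ a, lastElem β a i ∈ I ↔ i < n) :
    lastCount β a I = n := by
  unfold lastCount
  convert card_range n using 2
  ext i
  simp only [mem_filter, mem_range]
  constructor
  · rintro ⟨hi, hmem⟩
    exact (h i (by omega)).mp hmem
  · intro hi
    exact ⟨by omega, (h i (by omega)).mpr hi⟩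

theorem lastElem_mem_iff (hI : IsFenceIdeal (β ++ [a]) I) {i : ℕ} (hi : i ≤ a) :
    lastElem β a i ∈ I ↔ i < lastCount β a I := by
  have hlower : IsLowerSet (({i ∈ range (a + 1) | lastElem β a i ∈ I} : Finset ℕ) : Set ℕ) := by
    intro j k hkj hj
    simp only [mem_coe, mem_filter, mem_range] at hj ⊢
    refine ⟨by omega, hI _ _ ?_ hj.2⟩
    rw [val_lastElem (by omega), val_lastElem (by omega)]
    exact fenceLe_lastPos hkj (by omega)
  rw [lastCount, ← mem_iff_lt_card_of_isLowerSet hlower, mem_filter, mem_range]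
  exact ⟨fun h => ⟨by omega, h⟩, And.right⟩

theorem card_le_sum_add_lastCount (hI : IsFenceIdeal (β ++ [a]) I) :
    #I ≤ β.sum + lastCount β a I := by
  have hsub : I ⊆ {x ∈ I | x.val < β.sum} ∪ (range (lastCount β a I)).image (lastElem β a) := by
    intro x hx
    by_cases hxβ : (x : ℕ) < β.sum
    · exact mem_union_left _ (mem_filter.mpr ⟨hx, hxβ⟩)
    have hxle : (x : ℕ) ≤ β.sum + a := by have := x.isLt; simp at this; omega
    obtain ⟨i, hi, hxi⟩ := exists_eq_lastPos (not_lt.mp hxβ) hxle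
    rw [← eq_lastElem_iff hi] at hxi
    subst hxi
    exact mem_union_right _ (mem_image_of_mem _ (mem_range.mpr ((lastElem_mem_iff hI hi).mp hx)))
  have hlow : #{x ∈ I | x.val < β.sum} ≤ β.sum := by
    simpa using card_le_card_of_injOn Fin.val
      (fun x hx => mem_range.mpr (mem_filter.mp hx).2) Fin.val_injective.injOn
  calc #I ≤ #{x ∈ I | x.val < β.sum} + #((range (lastCount β a I)).image (lastElem β a)) :=
        (card_le_card hsub).trans (card_union_le _ _)
    _ ≤ β.sum + lastCount β a I := add_le_add hlow (card_image_le.trans (card_range _).le)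

theorem lastElem_lastCount_notMem (hI : IsFenceIdeal (β ++ [a]) I) (ht : lastCount β a I ≤ a) :
    lastElem β a (lastCount β a I) ∉ I := by
  rw [lastElem_mem_iff hI ht]
  exact lt_irrefl _

theorem lastElem_lastCount_sub_one_mem (hI : IsFenceIdeal (β ++ [a]) I)
    (ht : 1 ≤ lastCount β a I) : lastElem β a (lastCount β a I - 1) ∈ I := by
  have := lastCount_le_succ (I := I)
  rw [lastElem_mem_iff hI (by omega)]
  omega

def grow (β : List ℕ) (a : ℕ) (I : Finset (Fin ((β ++ [a]).sum + 1))) :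
    Finset (Fin ((β ++ [a]).sum + 1)) :=
  insert (lastElem β a (lastCount β a I)) I

def shrink (β : List ℕ) (a : ℕ) (I : Finset (Fin ((β ++ [a]).sum + 1))) :
    Finset (Fin ((β ++ [a]).sum + 1)) :=
  I.erase (lastElem β a (lastCount β a I - 1))

theorem card_grow (hI : IsFenceIdeal (β ++ [a]) I) (ht : lastCount β a I ≤ a) :
    #(grow β a I) = #I + 1 :=
  card_insert_of_notMem (lastElem_lastCount_notMem hI ht)

theorem card_shrink (hI : IsFenceIdeal (β ++ [a]) I) (ht : 1 ≤ lastCount β a I) :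
    #(shrink β a I) + 1 = #I :=
  card_erase_add_one (lastElem_lastCount_sub_one_mem hI ht)

theorem lastCount_grow (hI : IsFenceIdeal (β ++ [a]) I) (ht : lastCount β a I ≤ a) :
    lastCount β a (grow β a I) = lastCount β a I + 1 := by
  refine lastCount_eq (by omega) fun i hi => ?_
  rw [grow, mem_insert, lastElem_mem_iff hI hi]
  constructor
  · rintro (h | h)
    · exact (eq_of_lastElem_eq hi ht h).le.trans_lt (Nat.lt_succ_self _)
    · omega
  · intro h
    rcases Nat.lt_succ_iff_lt_or_eq.mp h with h | rfl
    exacts [.inr h, .inl rfl]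

theorem lastCount_shrink (hI : IsFenceIdeal (β ++ [a]) I) (ht : 1 ≤ lastCount β a I) :
    lastCount β a (shrink β a I) = lastCount β a I - 1 := by
  have := lastCount_le_succ (I := I)
  refine lastCount_eq (by omega) fun i hi => ?_
  rw [shrink, mem_erase, lastElem_mem_iff hI hi]
  constructor
  · rintro ⟨hne, h⟩
    have : i ≠ lastCount β a I - 1 := fun h => hne (h ▸ rfl)
    omega
  · intro h
    exact ⟨fun heq => by have := eq_of_lastElem_eq hi (by omega) heq; omega, by omega⟩

theorem shrink_grow (hI : IsFenceIdeal (β ++ [a]) I) (ht : lastCount β a I ≤ a) :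
    shrink β a (grow β a I) = I := by
  rw [shrink, lastCount_grow hI ht, Nat.add_sub_cancel, grow,
    erase_insert (lastElem_lastCount_notMem hI ht)]

theorem grow_shrink (hI : IsFenceIdeal (β ++ [a]) I) (ht : 1 ≤ lastCount β a I) :
    grow β a (shrink β a I) = I := by
  rw [grow, lastCount_shrink hI ht, shrink, insert_erase (lastElem_lastCount_sub_one_mem hI ht)]

theorem isFenceIdeal_grow (hβ : ∀ x ∈ β, 0 < x) (hI : IsFenceIdeal (β ++ [a]) I)
    (ht : lastCount β a I < a) : IsFenceIdeal (β ++ [a]) (grow β a I) := by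
  intro p q hpq hq
  rcases mem_insert.mp hq with rfl | hq
  · rw [val_lastElem ht.le] at hpq
    obtain ⟨i, hit, hpi⟩ := exists_eq_lastPos_of_fenceLe hβ ht hpq
    rw [← eq_lastElem_iff (by omega)] at hpi
    subst hpi
    rcases hit.lt_or_eq with hit | rfl
    · exact mem_insert_of_mem ((lastElem_mem_iff hI (by omega)).mpr hit)
    · exact mem_insert_self _ _
  · exact mem_insert_of_mem (hI p q hpq hq)

theorem isFenceIdeal_shrink (hβ : ∀ x ∈ β, 0 < x) (hI : IsFenceIdeal (β ++ [a]) I)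
    (ht : 2 ≤ lastCount β a I) : IsFenceIdeal (β ++ [a]) (shrink β a I) := by
  have := lastCount_le_succ (I := I)
  intro p q hpq hq
  obtain ⟨hqne, hqI⟩ := mem_erase.mp hq
  refine mem_erase.mpr ⟨?_, hI p q hpq hqI⟩
  rintro rfl
  rw [val_lastElem (by omega)] at hpq
  obtain ⟨i, hti, hia, hqi⟩ := exists_eq_lastPos_of_lastPos_fenceLe hβ (by omega) (by omega) hpq
  rw [← eq_lastElem_iff hia] at hqi
  subst hqi
  have := (lastElem_mem_iff hI hia).mp hqI
  exact hqne (by rw [show i = lastCount β a I - 1 by omega])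

theorem fenceRk_le_fenceRk_succ (hβ : ∀ x ∈ β, 0 < x) {k : ℕ} (hk : k < a) :
    fenceRk (β ++ [a]) k ≤ fenceRk (β ++ [a]) (k + 1) := by
  unfold fenceRk
  have ht (I : {I // IsFenceIdeal (β ++ [a]) I ∧ #I = k}) : lastCount β a I < a := by
    have := I.2.2
    have := lastCount_le_card (I := I.1)
    omega
  refine Nat.card_le_card_of_injective
    (fun I => ⟨grow β a I.1, isFenceIdeal_grow hβ I.2.1 (ht I), ?_⟩) ?_
  · rw [card_grow I.2.1 (ht I).le, I.2.2]
  · intro I J hIJ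
    have h : grow β a I.1 = grow β a J.1 := congrArg Subtype.val hIJ
    apply Subtype.ext
    rw [← shrink_grow I.2.1 (ht I).le, ← shrink_grow J.2.1 (ht J).le, h]

theorem fenceRk_succ_le_fenceRk (hβ : ∀ x ∈ β, 0 < x) {k : ℕ} (hk : β.sum < k) :
    fenceRk (β ++ [a]) (k + 1) ≤ fenceRk (β ++ [a]) k := by
  unfold fenceRk
  have ht (I : {I // IsFenceIdeal (β ++ [a]) I ∧ #I = k + 1}) : 2 ≤ lastCount β a I := by
    have := I.2.2
    have := card_le_sum_add_lastCount I.2.1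
    omega
  have ht₁ (I : {I // IsFenceIdeal (β ++ [a]) I ∧ #I = k + 1}) : 1 ≤ lastCount β a I :=
    one_le_two.trans (ht I)
  refine Nat.card_le_card_of_injective
    (fun I => ⟨shrink β a I.1, isFenceIdeal_shrink hβ I.2.1 (ht I), ?_⟩) ?_
  · have := card_shrink I.2.1 (ht₁ I)
    rw [I.2.2] at this
    omega
  · intro I J hIJ
    have h : shrink β a I.1 = shrink β a J.1 := congrArg Subtype.val hIJ
    apply Subtype.ext
    rw [← grow_shrink I.2.1 (ht₁ I), ← grow_shrink J.2.1 (ht₁ J), h]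

end Fence

theorem rpoly_unimodal_long_last_general (β : List ℕ) (a : ℕ)
    (hβ : ∀ x ∈ β, 0 < x) (hlong : β.sum ≤ a) :
    SeqUnimodal (fenceRk (β ++ [a])) :=
  seqUnimodal_of_le_succ_of_succ_le (m := a) (fun _ hk => Fence.fenceRk_le_fenceRk_succ hβ hk)
    fun _ hk => Fence.fenceRk_succ_le_fenceRk hβ (hlong.trans_lt hk)

/-- If `α_s ≥ α₁ + ⋯ + α_{s-1}` then `r(q;α)` is unimodal.
Here `α = β ++ [a]`, so `a = α_s`. -/
theorem rpoly_unimodal_long_last (β : List ℕ) (a : ℕ) (ha : 0 < a)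
    (hβ : ∀ x ∈ β, 0 < x) (hlong : β.sum ≤ a) :
    SeqUnimodal (fenceRk (β ++ [a])) :=
  rpoly_unimodal_long_last_general β a hβ hlong
end

section
/- Let α = (α₁,…,α_s) be a composition, n = |F(α)|, and suppose α_t > Σ_{i≠t} α_i for some index t. Let F′ be the poset obtained from F(α) by removing all elements of segment t, let m = |F′| and ℓ = |L(F′)|. Then the maximum cardinality of a rank of L(α) equals ℓ, and r_k(α) = ℓ for all k with m+1 ≤ k ≤ n−m−1. -/
open Polynomial

/-!
Write `F'` for the fence with segment `t` deleted. An order ideal `I` of `F(α)` is determined by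
its trace `J = I ∩ F'` and its size: `I` meets the chain of segment `t` in an initial piece, of
size `|I| - |J|`. So `I ↦ J` is injective on every rank, and `r_k(α) ≤ ℓ`. Conversely, for
`m < k ≤ α_t = n - m - 1`, every ideal `J` of `F'` extends to an ideal of size `k` by adding the
`k - |J| ≥ 1` lowest points of segment `t`. This works because adjacent segments of a fence meet
in a point that is minimal in both or maximal in both: the only point of segment `t` lying above
elements of `F'` is its top, which is not added since `k - |J| ≤ α_t`, and the only one lying below
elements of `F'` is its bottom, which is always added.
-/

theorem Finset.eq_of_card_eq_of_lowerClosed {β γ : Type*} [LinearOrder γ] (f : β → γ)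
    {U : Set β} {S T : Finset β} (hSU : ∀ x ∈ S, x ∈ U) (hTU : ∀ x ∈ T, x ∈ U)
    (hS : ∀ q ∈ S, ∀ p ∈ U, f p ≤ f q → p ∈ S) (hT : ∀ q ∈ T, ∀ p ∈ U, f p ≤ f q → p ∈ T)
    (hcard : S.card = T.card) : S = T := by
  by_cases hST : S ⊆ T
  · exact Finset.eq_of_subset_of_card_le hST hcard.ge
  obtain ⟨s, hsS, hsT⟩ := Finset.not_subset.mp hST
  have hTS : T ⊆ S := fun x hx =>
    hS s hsS x (hTU x hx) (le_of_not_gt fun hlt => hsT (hT x hx s (hSU s hsS) hlt.le))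
  exact (Finset.eq_of_subset_of_card_le hTS hcard.le).symm

namespace Fence

def InSeg (α : List ℕ) (j p : ℕ) : Prop :=
  (α.take j).sum ≤ p ∧ p ≤ (α.take (j + 1)).sum

instance (α : List ℕ) (j p : ℕ) : Decidable (InSeg α j p) := by
  unfold InSeg; infer_instance

/-- Height of position `p` in the chain formed by segment `j`. -/
def depth (α : List ℕ) (j p : ℕ) : ℕ :=
  if j % 2 = 0 then p - (α.take j).sum else (α.take (j + 1)).sum - p

variable {α : List ℕ}

theorem fenceLe_iff {p q : ℕ} : fenceLe α p q ↔
    p = q ∨ ∃ j < α.length, InSeg α j p ∧ InSeg α j q ∧ depth α j p ≤ depth α j q := by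
  unfold fenceLe InSeg depth
  refine or_congr_right (exists_congr fun j => and_congr_right fun _ => ?_)
  split_ifs <;> omega

theorem eq_of_depth_eq {j p q : ℕ} (hp : InSeg α j p) (hq : InSeg α j q)
    (h : depth α j p = depth α j q) : p = q := by
  unfold InSeg depth at *
  split_ifs at h <;> omega

theorem depth_le {j p : ℕ} (hj : j < α.length) (hp : InSeg α j p) : depth α j p ≤ α[j] := by
  have := List.sum_take_succ α j hj
  unfold InSeg depth at *
  split_ifs <;> omega

theorem sum_take_lt_sum_take (hpos : ∀ x ∈ α, 0 < x) {i j : ℕ} (hij : i < j)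
    (hj : j ≤ α.length) : (α.take i).sum < (α.take j).sum := by
  have hi : i < α.length := hij.trans_le hj
  calc (α.take i).sum < (α.take (i + 1)).sum := by
        rw [List.sum_take_succ α i hi]; exact Nat.lt_add_of_pos_right (hpos _ (α.getElem_mem hi))
    _ ≤ (α.take j).sum := List.monotone_sum_take α hij

theorem inSeg_inter_of_lt (hpos : ∀ x ∈ α, 0 < x) {j t x : ℕ} (hjt : j < t)
    (ht : t < α.length) (hj : InSeg α j x) (hx : InSeg α t x) :
    j + 1 = t ∧ x = (α.take t).sum := by
  have hle : (α.take (j + 1)).sum ≤ (α.take t).sum := List.monotone_sum_take α hjt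
  obtain rfl : j + 1 = t := by
    by_contra hne
    have := sum_take_lt_sum_take hpos (show j + 1 < t by omega) ht.le
    unfold InSeg at hj hx; omega
  unfold InSeg at hj hx
  exact ⟨rfl, by omega⟩

/-- Adjacent segments meet at a point that is a minimum of both or a maximum of both. -/
theorem depth_junction {j : ℕ} (hj : j + 1 < α.length) :
    (depth α j (α.take (j + 1)).sum = 0 ∧ depth α (j + 1) (α.take (j + 1)).sum = 0) ∨
      (depth α j (α.take (j + 1)).sum = α[j] ∧
        depth α (j + 1) (α.take (j + 1)).sum = α[j + 1]) := by
  have h1 := List.sum_take_succ α j (by omega)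
  have h2 := List.sum_take_succ α (j + 1) hj
  unfold depth
  split_ifs <;> omega

theorem eq_of_inSeg_inter (hpos : ∀ x ∈ α, 0 < x) {j t x y : ℕ} (hj : j < α.length)
    (ht : t < α.length) (hjt : j ≠ t) (hxj : InSeg α j x) (hxt : InSeg α t x)
    (hyj : InSeg α j y) (hyt : InSeg α t y) : x = y := by
  rcases hjt.lt_or_gt with hlt | hlt
  · rw [(inSeg_inter_of_lt hpos hlt ht hxj hxt).2, (inSeg_inter_of_lt hpos hlt ht hyj hyt).2]
  · rw [(inSeg_inter_of_lt hpos hlt hj hxt hxj).2, (inSeg_inter_of_lt hpos hlt hj hyt hyj).2]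

theorem depth_inter (hpos : ∀ x ∈ α, 0 < x) {j t x : ℕ} (hj : j < α.length)
    (ht : t < α.length) (hjt : j ≠ t) (hxj : InSeg α j x) (hxt : InSeg α t x) :
    (depth α j x = 0 ∧ depth α t x = 0) ∨ (depth α j x = α[j] ∧ depth α t x = α[t]) := by
  rcases hjt.lt_or_gt with hlt | hlt
  · obtain ⟨rfl, rfl⟩ := inSeg_inter_of_lt hpos hlt ht hxj hxt
    exact depth_junction ht
  · obtain ⟨rfl, rfl⟩ := inSeg_inter_of_lt hpos hlt hj hxt hxj
    exact (depth_junction hj).imp And.symm And.symm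

theorem depth_le_depth_of_fenceLe (hpos : ∀ x ∈ α, 0 < x) {t p q : ℕ} (ht : t < α.length)
    (hp : InSeg α t p) (hq : InSeg α t q) (hpq : fenceLe α p q) : depth α t p ≤ depth α t q := by
  obtain rfl | ⟨j, hj, hpj, hqj, hle⟩ := fenceLe_iff.mp hpq
  · rfl
  obtain rfl | hjt := eq_or_ne j t
  · exact hle
  · rw [eq_of_inSeg_inter hpos hj ht hjt hpj hp hqj hq]

theorem depth_eq_zero_of_fenceLe (hpos : ∀ x ∈ α, 0 < x) {t p q : ℕ} (ht : t < α.length)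
    (hp : InSeg α t p) (hq : ¬InSeg α t q) (hpq : fenceLe α p q) : depth α t p = 0 := by
  obtain rfl | ⟨j, hj, hpj, hqj, hle⟩ := fenceLe_iff.mp hpq
  · exact absurd hp hq
  obtain rfl | hjt := eq_or_ne j t
  · exact absurd hqj hq
  rcases depth_inter hpos hj ht hjt hpj hp with ⟨-, h⟩ | ⟨hpj_top, -⟩
  · exact h
  · -- `p` is the top of segment `j`, so `p = q`
    have := depth_le hj hqj
    exact absurd (eq_of_depth_eq hpj hqj (by omega) ▸ hp) hq

theorem depth_eq_of_fenceLe (hpos : ∀ x ∈ α, 0 < x) {t p q : ℕ} (ht : t < α.length)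
    (hp : ¬InSeg α t p) (hq : InSeg α t q) (hpq : fenceLe α p q) : depth α t q = α[t] := by
  obtain rfl | ⟨j, hj, hpj, hqj, hle⟩ := fenceLe_iff.mp hpq
  · exact absurd hq hp
  obtain rfl | hjt := eq_or_ne j t
  · exact absurd hpj hp
  rcases depth_inter hpos hj ht hjt hqj hq with ⟨hqj_bot, -⟩ | ⟨-, h⟩
  · exact absurd (eq_of_depth_eq hpj hqj (by omega) ▸ hq) hp
  · exact h

def segChunk (α : List ℕ) (t z : ℕ) : Finset (Fin (α.sum + 1)) :=
  Finset.univ.filter fun p => InSeg α t p ∧ depth α t p < z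

theorem mem_segChunk {t z : ℕ} {p : Fin (α.sum + 1)} :
    p ∈ segChunk α t z ↔ InSeg α t p ∧ depth α t p < z := by
  simp [segChunk]

theorem card_segChunk {t z : ℕ} (ht : t < α.length) (hz : z ≤ α[t] + 1) :
    (segChunk α t z).card = z := by
  refine .trans ?_ (Finset.card_range z)
  refine Finset.card_nbij (fun p => depth α t p) (fun p hp => ?_) (fun p hp q hq h => ?_)
    (fun d hd => ?_)
  · simpa using (mem_segChunk.1 hp).2
  · exact Fin.ext (eq_of_depth_eq (mem_segChunk.1 hp).1 (mem_segChunk.1 hq).1 h)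
  · have h₁ := List.sum_take_succ α t ht
    have h₂ := List.sum_take_add_sum_drop α (t + 1)
    have hd : d < z := by simpa using hd
    refine ⟨⟨if t % 2 = 0 then (α.take t).sum + d else (α.take (t + 1)).sum - d,
      by split_ifs <;> omega⟩, ?_, ?_⟩ <;>
    simp only [Finset.mem_coe, mem_segChunk, InSeg, depth] <;> split_ifs <;> omega

/-- Order ideals of `F'`, the fence with segment `t` deleted, as sets of positions of `F(α)`. -/
def IsDeletedFenceIdeal (α : List ℕ) (t : ℕ) (J : Finset (Fin (α.sum + 1))) : Prop :=
  (∀ p ∈ J, ¬InSeg α t p) ∧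
    ∀ p q : Fin (α.sum + 1), ¬InSeg α t p → ¬InSeg α t q → fenceLe α p q → q ∈ J → p ∈ J

def deleteSeg (α : List ℕ) (t : ℕ) (I : Finset (Fin (α.sum + 1))) : Finset (Fin (α.sum + 1)) :=
  I.filter fun p => ¬InSeg α t p

theorem isDeletedFenceIdeal_deleteSeg {t : ℕ} {I : Finset (Fin (α.sum + 1))}
    (hI : IsFenceIdeal α I) : IsDeletedFenceIdeal α t (deleteSeg α t I) := by
  refine ⟨fun p hp => (Finset.mem_filter.1 hp).2, fun p q hp _ hpq hq => ?_⟩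
  exact Finset.mem_filter.2 ⟨hI p q hpq (Finset.mem_filter.1 hq).1, hp⟩

theorem card_le_of_forall_not_inSeg {t : ℕ} (ht : t < α.length) {J : Finset (Fin (α.sum + 1))}
    (hJ : ∀ p ∈ J, ¬InSeg α t p) : J.card ≤ α.sum - α[t] := by
  have hsub : J ⊆ Finset.univ \ segChunk α t (α[t] + 1) := fun p hp => by
    simp only [Finset.mem_sdiff, Finset.mem_univ, mem_segChunk, true_and, not_and]
    exact fun h => absurd h (hJ p hp)
  calc J.card ≤ (Finset.univ \ segChunk α t (α[t] + 1)).card := Finset.card_le_card hsub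
    _ = α.sum - α[t] := by
      rw [Finset.card_univ_sdiff, card_segChunk ht le_rfl, Fintype.card_fin]; omega

def onSeg (α : List ℕ) (t : ℕ) (I : Finset (Fin (α.sum + 1))) : Finset (Fin (α.sum + 1)) :=
  I.filter fun p => InSeg α t p

theorem onSeg_union_deleteSeg (t : ℕ) (I : Finset (Fin (α.sum + 1))) :
    onSeg α t I ∪ deleteSeg α t I = I :=
  Finset.filter_union_filter_not_eq _ I

theorem card_onSeg_add_card_deleteSeg (t : ℕ) (I : Finset (Fin (α.sum + 1))) :
    (onSeg α t I).card + (deleteSeg α t I).card = I.card :=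
  Finset.card_filter_add_card_filter_not _

theorem onSeg_lowerClosed {t : ℕ} (ht : t < α.length) {I : Finset (Fin (α.sum + 1))}
    (hI : IsFenceIdeal α I) : ∀ q ∈ onSeg α t I, ∀ p ∈ {p : Fin (α.sum + 1) | InSeg α t p},
      depth α t p ≤ depth α t q → p ∈ onSeg α t I := by
  intro q hq p hp hpq
  rw [onSeg, Finset.mem_filter] at hq ⊢
  exact ⟨hI p q (fenceLe_iff.2 (Or.inr ⟨t, ht, hp, hq.2, hpq⟩)) hq.1, hp⟩

theorem eq_of_deleteSeg_eq {t : ℕ} (ht : t < α.length) {I₁ I₂ : Finset (Fin (α.sum + 1))}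
    (hI₁ : IsFenceIdeal α I₁) (hI₂ : IsFenceIdeal α I₂) (hcard : I₁.card = I₂.card)
    (h : deleteSeg α t I₁ = deleteSeg α t I₂) : I₁ = I₂ := by
  have hinSeg : ∀ I, ∀ p ∈ onSeg α t I, p ∈ {p : Fin (α.sum + 1) | InSeg α t p} :=
    fun _ _ hp => (Finset.mem_filter.1 hp).2
  have htrace : onSeg α t I₁ = onSeg α t I₂ := by
    refine Finset.eq_of_card_eq_of_lowerClosed (fun p : Fin (α.sum + 1) => depth α t p)
      (hinSeg I₁) (hinSeg I₂)
      (onSeg_lowerClosed ht hI₁) (onSeg_lowerClosed ht hI₂) ?_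
    have h₁ := card_onSeg_add_card_deleteSeg t I₁
    have h₂ := card_onSeg_add_card_deleteSeg t I₂
    rw [h] at h₁
    omega
  rw [← onSeg_union_deleteSeg t I₁, ← onSeg_union_deleteSeg t I₂, htrace, h]

theorem isFenceIdeal_union_segChunk (hpos : ∀ x ∈ α, 0 < x) {t : ℕ} (ht : t < α.length)
    {J : Finset (Fin (α.sum + 1))} (hJ : IsDeletedFenceIdeal α t J) {z : ℕ} (hz₀ : 0 < z)
    (hz : z ≤ α[t]) : IsFenceIdeal α (J ∪ segChunk α t z) := by
  intro p q hpq hq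
  rw [Finset.mem_union, mem_segChunk] at hq ⊢
  by_cases hp : InSeg α t p <;> by_cases hqt : InSeg α t q
  · have hqz := (hq.resolve_left fun h => hJ.1 q h hqt).2
    exact Or.inr ⟨hp, (depth_le_depth_of_fenceLe hpos ht hp hqt hpq).trans_lt hqz⟩
  · exact Or.inr ⟨hp, by rw [depth_eq_zero_of_fenceLe hpos ht hp hqt hpq]; exact hz₀⟩
  · have hqz := (hq.resolve_left fun h => hJ.1 q h hqt).2
    rw [depth_eq_of_fenceLe hpos ht hp hqt hpq] at hqz
    omega
  · exact Or.inl (hJ.2 p q hp hqt hpq (hq.resolve_right fun h => hqt h.1))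

theorem deleteSeg_union_segChunk {t : ℕ} {J : Finset (Fin (α.sum + 1))}
    (hJ : ∀ p ∈ J, ¬InSeg α t p) (z : ℕ) : deleteSeg α t (J ∪ segChunk α t z) = J := by
  rw [deleteSeg, Finset.filter_union, Finset.filter_true_of_mem hJ,
    Finset.filter_false_of_mem fun p hp => not_not_intro (mem_segChunk.1 hp).1,
    Finset.union_empty]

def deleteSegOnRank (α : List ℕ) (t k : ℕ) :
    {I : Finset (Fin (α.sum + 1)) // IsFenceIdeal α I ∧ I.card = k} →
      {J : Finset (Fin (α.sum + 1)) // IsDeletedFenceIdeal α t J} :=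
  fun I => ⟨deleteSeg α t I, isDeletedFenceIdeal_deleteSeg I.2.1⟩

theorem deleteSegOnRank_injective {t : ℕ} (ht : t < α.length) (k : ℕ) :
    Function.Injective (deleteSegOnRank α t k) := fun I₁ I₂ h =>
  Subtype.ext <| eq_of_deleteSeg_eq ht I₁.2.1 I₂.2.1 (I₁.2.2.trans I₂.2.2.symm)
    (congrArg Subtype.val h)

theorem deleteSegOnRank_surjective (hpos : ∀ x ∈ α, 0 < x) {t k : ℕ} (ht : t < α.length)
    (hk₀ : α.sum - α[t] < k) (hk : k ≤ α[t]) : Function.Surjective (deleteSegOnRank α t k) := by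
  intro J
  have hJk := card_le_of_forall_not_inSeg ht J.2.1
  have hdisj : Disjoint J.1 (segChunk α t (k - J.1.card)) :=
    Finset.disjoint_left.2 fun p hpJ hpC => J.2.1 p hpJ (mem_segChunk.1 hpC).1
  refine ⟨⟨J.1 ∪ segChunk α t (k - J.1.card),
    isFenceIdeal_union_segChunk hpos ht J.2 (by omega) (by omega), ?_⟩,
    Subtype.ext (deleteSeg_union_segChunk J.2.1 _)⟩
  rw [Finset.card_union_of_disjoint hdisj, card_segChunk ht (by omega)]
  omega

end Fence

/-- If segment `t` is longer than the sum of the lengths of all the other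
segments, then the maximum size of a rank of `L(α)` equals the number `ℓ` of
order ideals of the poset `F'` obtained by deleting segment `t` from `F(α)`,
and every rank `k` with `m+1 ≤ k ≤ n-m-1` has exactly `ℓ` elements, where
`m = #F'` and `n = #F(α)`.  (Segment `t`, 0-indexed, occupies positions
`(α.take t).sum` through `(α.take (t+1)).sum`.) -/
theorem fence_maxRank_of_long_segment (α : List ℕ) (hpos : ∀ x ∈ α, 0 < x)
    (t : ℕ) (ht : t < α.length)
    (hbig : (α.take t).sum + (α.drop (t + 1)).sum < α.get ⟨t, ht⟩) :
    let n := α.sum + 1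
    let m := (α.take t).sum + (α.drop (t + 1)).sum
    let seg : Set ℕ := Set.Icc ((α.take t).sum) ((α.take (t + 1)).sum)
    let ℓ := Nat.card {I : Finset (Fin (α.sum + 1)) //
      (∀ p ∈ I, (p : ℕ) ∉ seg) ∧
      ∀ p q : Fin (α.sum + 1), (p : ℕ) ∉ seg → (q : ℕ) ∉ seg →
        fenceLe α p q → q ∈ I → p ∈ I}
    (∀ k, fenceRk α k ≤ ℓ) ∧ (∃ k, fenceRk α k = ℓ) ∧
      ∀ k, m + 1 ≤ k → k ≤ n - m - 1 → fenceRk α k = ℓ := by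
  intro n m seg ℓ
  have hsum : α.sum = m + α[t] := by
    have := List.sum_take_succ α t ht
    have := List.sum_take_add_sum_drop α (t + 1)
    omega
  have hbig' : m < α[t] := hbig
  have hrank : ∀ k, m < k → k ≤ α[t] → fenceRk α k = ℓ := fun k hk₀ hk =>
    Nat.card_eq_of_bijective _ ⟨Fence.deleteSegOnRank_injective ht k,
      Fence.deleteSegOnRank_surjective hpos ht (by omega) hk⟩
  refine ⟨fun k => Nat.card_le_card_of_injective _ (Fence.deleteSegOnRank_injective ht k),
    ⟨m + 1, hrank _ (by omega) hbig'⟩, fun k hk₀ hk => hrank k hk₀ (by omega)⟩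
end

section
/- Let α = (α₁,…,α_s) be a composition such that α_t > Σ_{i≠t} α_i for some index t. Then the rank sequence of the lattice L(α) of lower order ideals of the fence F(α) is unimodal. -/
open Polynomial

/-!
Let `w = α_t` and let `n = α.sum + 1` be the number of points of the fence. The points of segment
`t` form a chain `e 0 < ⋯ < e w` from a minimal to a maximal point, and its interior points are
comparable with nothing off the chain. For an ideal `I` with `#I < w`, adding the least point
`e c` of the chain missing from `I` gives an ideal, and `c` is the number of points among
`e 0, …, e (w - 1)` in `I`, so it can be read off the new ideal: this injects rank `k` into
rank `k + 1` for `k < w`. Complementation identifies ideals of `F(α)` with ideals of the dual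
poset, where the same chain appears reversed, so rank `k + 1` injects into rank `k` for
`k ≥ n - w`. The long segment gives `n ≤ 2w`, so the ranks increase up to `n - w` and decrease
from there on.
-/
open Finset

theorem seqUnimodal_of_succ {a : ℕ → ℕ} (m : ℕ) (hup : ∀ k < m, a k ≤ a (k + 1))
    (hdown : ∀ k, m ≤ k → a (k + 1) ≤ a k) : SeqUnimodal a := by
  refine ⟨m, fun i j hij => ⟨fun hjm => ?_, fun hmi => ?_⟩⟩
  · induction j, hij using Nat.le_induction with
    | base => exact le_rfl
    | succ j hij ih => exact (ih (by omega)).trans (hup j hjm)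
  · induction j, hij using Nat.le_induction with
    | base => exact le_rfl
    | succ j hij ih => exact (hdown j (hmi.trans hij)).trans ih

section DownSets

variable {X : Type*}

def IsDownSet (r : X → X → Prop) (I : Finset X) : Prop :=
  ∀ p q, r p q → q ∈ I → p ∈ I

noncomputable def downSetCount (r : X → X → Prop) (k : ℕ) : ℕ :=
  Nat.card {I : Finset X // IsDownSet r I ∧ #I = k}

/-- `e 0, e 1, …, e w` is a chain from a minimal to a maximal element of `r` whose interior
points `e 1, …, e (w - 1)` are related to no point off the chain. -/
structure IsIsolatedChain (r : X → X → Prop) (e : ℕ → X) (w : ℕ) : Prop where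
  injOn : Set.InjOn e (Set.Iic w)
  rel_of_le : ∀ ⦃i j⦄, i ≤ j → j ≤ w → r (e i) (e j)
  below : ∀ ⦃p i⦄, r p (e i) → i < w → ∃ j ≤ i, p = e j
  above : ∀ ⦃q i⦄, r (e i) q → 0 < i → i ≤ w → ∃ j, i ≤ j ∧ j ≤ w ∧ q = e j

variable {r : X → X → Prop} {e : ℕ → X} {w k : ℕ} {I : Finset X}

theorem IsIsolatedChain.flip (h : IsIsolatedChain r e w) :
    IsIsolatedChain (flip r) (fun i => e (w - i)) w where
  injOn i hi j hj hij := by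
    simp only [Set.mem_Iic] at hi hj
    have := h.injOn (Set.mem_Iic.2 (Nat.sub_le w i)) (Set.mem_Iic.2 (Nat.sub_le w j)) hij
    omega
  rel_of_le i j hij hj := h.rel_of_le (by omega) (by omega)
  below p i hp hi := by
    obtain ⟨j, hj, hjw, rfl⟩ := h.above hp (by omega) (by omega)
    exact ⟨w - j, by omega, by rw [Nat.sub_sub_self hjw]⟩
  above q i hq hi hiw := by
    obtain ⟨j, hj, rfl⟩ := h.below hq (by omega)
    exact ⟨w - j, by omega, by omega, by rw [Nat.sub_sub_self (by omega)]⟩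

theorem downSetCount_eq_zero [Fintype X] (hk : Fintype.card X < k) : downSetCount r k = 0 := by
  refine Finite.card_eq_zero_iff.2 ⟨fun ⟨I, _, hI⟩ => ?_⟩
  have := card_le_univ I
  omega

variable [DecidableEq X]

theorem isDownSet_flip_compl [Fintype X] : IsDownSet (flip r) Iᶜ ↔ IsDownSet r I := by
  simp only [IsDownSet, flip, mem_compl]
  exact ⟨fun h p q hpq hq => not_not.1 fun hp => h q p hpq hp hq,
    fun h p q hqp hq hp => hq (h q p hqp hp)⟩

theorem downSetCount_eq_flip [Fintype X] (hk : k ≤ Fintype.card X) :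
    downSetCount r k = downSetCount (flip r) (Fintype.card X - k) := by
  refine Nat.card_congr (Equiv.subtypeEquiv (compl_involutive.toPerm _) fun I => ?_)
  have := card_le_univ I
  simp only [Function.Involutive.coe_toPerm, isDownSet_flip_compl, card_compl]
  exact and_congr_right fun _ => by omega

def chainCount (e : ℕ → X) (w : ℕ) (I : Finset X) : ℕ := #{i ∈ range w | e i ∈ I}

theorem chainCount_eq {m : ℕ} (hm : m ≤ w) (h : ∀ i < w, e i ∈ I ↔ i < m) :
    chainCount e w I = m := by
  rw [chainCount, ← card_range m]
  congr 1
  ext i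
  simp only [mem_filter, mem_range]
  constructor
  · exact fun ⟨hi, hei⟩ => (h i hi).1 hei
  · exact fun hi => ⟨by omega, (h i (by omega)).2 hi⟩

namespace IsIsolatedChain

variable (hc : IsIsolatedChain r e w)
include hc

theorem chainCount_le_card : chainCount e w I ≤ #I :=
  card_le_card_of_injOn e (fun _ hi => (mem_filter.1 hi).2)
    fun _ hi _ hj hij => hc.injOn (Set.mem_Iic.2 (mem_range.1 (mem_filter.1 hi).1).le)
      (Set.mem_Iic.2 (mem_range.1 (mem_filter.1 hj).1).le) hij

theorem mem_iff_lt_chainCount (hI : IsDownSet r I) {i : ℕ} (hi : i < w) :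
    e i ∈ I ↔ i < chainCount e w I := by
  have mem_of_le {j} (hj : j ≤ i) (he : e i ∈ I) : e j ∈ I := hI _ _ (hc.rel_of_le hj hi.le) he
  constructor
  · intro he
    calc i < #(range (i + 1)) := by simp
      _ ≤ chainCount e w I := card_le_card fun j hj => by
        simp only [mem_range, mem_filter] at hj ⊢
        exact ⟨by omega, mem_of_le (by omega) he⟩
  · intro hlt
    by_contra he
    have : chainCount e w I ≤ #(range i) := card_le_card fun j hj => by
      simp only [mem_range, mem_filter] at hj ⊢
      by_contra hij
      exact he (hI _ _ (hc.rel_of_le (by omega) hj.1.le) hj.2)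
    rw [card_range] at this
    omega

theorem notMem_chainCount (hI : IsDownSet r I) (hw : chainCount e w I < w) :
    e (chainCount e w I) ∉ I := by
  rw [hc.mem_iff_lt_chainCount hI hw]
  exact lt_irrefl _

theorem isDownSet_insert (hI : IsDownSet r I) (hw : chainCount e w I < w) :
    IsDownSet r (insert (e (chainCount e w I)) I) := by
  intro p q hpq hq
  rw [mem_insert] at hq ⊢
  rcases hq with rfl | hq
  · obtain ⟨j, hj, rfl⟩ := hc.below hpq hw
    rcases hj.eq_or_lt with rfl | hj
    · exact Or.inl rfl
    · exact Or.inr ((hc.mem_iff_lt_chainCount hI (by omega)).2 hj)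
  · exact Or.inr (hI p q hpq hq)

theorem chainCount_insert (hI : IsDownSet r I) (hw : chainCount e w I < w) :
    chainCount e w (insert (e (chainCount e w I)) I) = chainCount e w I + 1 := by
  refine chainCount_eq hw fun i hi => ?_
  rw [mem_insert, hc.mem_iff_lt_chainCount hI hi]
  have : e i = e (chainCount e w I) ↔ i = chainCount e w I :=
    hc.injOn.eq_iff (Set.mem_Iic.2 hi.le) (Set.mem_Iic.2 hw.le)
  rw [this]
  omega

theorem downSetCount_le_succ [Fintype X] (hk : k < w) :
    downSetCount r k ≤ downSetCount r (k + 1) := by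
  have hw {I : Finset X} (hI : #I = k) : chainCount e w I < w :=
    hc.chainCount_le_card.trans_lt (hI ▸ hk)
  refine Nat.card_le_card_of_injective (fun I => ⟨insert (e (chainCount e w I.1)) I.1,
    hc.isDownSet_insert I.2.1 (hw I.2.2),
    by rw [card_insert_of_notMem (hc.notMem_chainCount I.2.1 (hw I.2.2)), I.2.2]⟩) ?_
  rintro ⟨I, hI, hIk⟩ ⟨J, hJ, hJk⟩ hIJ
  simp only [Subtype.mk.injEq] at hIJ ⊢
  have hcount : chainCount e w I = chainCount e w J := by
    have := congrArg (chainCount e w) hIJ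
    rwa [hc.chainCount_insert hI (hw hIk), hc.chainCount_insert hJ (hw hJk),
      add_left_inj] at this
  rw [← erase_insert (hc.notMem_chainCount hI (hw hIk)), hIJ, hcount,
    erase_insert (hc.notMem_chainCount hJ (hw hJk))]

theorem downSetCount_succ_le [Fintype X] (hk : Fintype.card X - w ≤ k) :
    downSetCount r (k + 1) ≤ downSetCount r k := by
  rcases lt_or_ge (Fintype.card X) (k + 1) with hN | hN
  · rw [downSetCount_eq_zero hN]
    exact Nat.zero_le _
  rw [downSetCount_eq_flip hN, downSetCount_eq_flip (by omega : k ≤ Fintype.card X),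
    show Fintype.card X - k = Fintype.card X - (k + 1) + 1 by omega]
  exact hc.flip.downSetCount_le_succ (by omega)

theorem seqUnimodal_downSetCount [Fintype X] (hN : Fintype.card X ≤ 2 * w) :
    SeqUnimodal (downSetCount r) :=
  seqUnimodal_of_succ (Fintype.card X - w) (fun _ hk => hc.downSetCount_le_succ (by omega))
    fun _ hk => hc.downSetCount_succ_le hk

end IsIsolatedChain

end DownSets

section Fence

variable {α : List ℕ} {t i p q : ℕ}

def segStart (α : List ℕ) (j : ℕ) : ℕ := (α.take j).sum

def segPoint (α : List ℕ) (t i : ℕ) : ℕ :=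
  if t % 2 = 0 then segStart α t + i else segStart α (t + 1) - i

theorem segStart_succ {j : ℕ} (hj : j < α.length) : segStart α (j + 1) = segStart α j + α[j] :=
  List.sum_take_succ α j hj

theorem segStart_le_sum (j : ℕ) : segStart α j ≤ α.sum :=
  (List.take_sublist j α).sum_le_sum fun _ _ => Nat.zero_le _

theorem strictMonoOn_segStart (hpos : ∀ x ∈ α, 0 < x) :
    StrictMonoOn (segStart α) (Set.Iic α.length) :=
  strictMonoOn_Iic_of_lt_succ fun j hj => by
    rw [Order.succ_eq_add_one, segStart_succ hj]
    exact Nat.lt_add_of_pos_right (hpos _ (List.getElem_mem hj))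

theorem segStart_overlap (hpos : ∀ x ∈ α, 0 < x) {j x : ℕ} (hj : j < α.length)
    (ht : t < α.length) (hj₁ : segStart α j ≤ x) (hj₂ : x ≤ segStart α (j + 1))
    (ht₁ : segStart α t ≤ x) (ht₂ : x ≤ segStart α (t + 1)) :
    j = t ∨ (j + 1 = t ∧ x = segStart α t) ∨ (t + 1 = j ∧ x = segStart α j) := by
  have hs := strictMonoOn_segStart hpos
  have h₁ : t ≤ j + 1 :=
    (hs.le_iff_le (Set.mem_Iic.2 ht.le) (Set.mem_Iic.2 hj)).1 (ht₁.trans hj₂)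
  have h₂ : j ≤ t + 1 :=
    (hs.le_iff_le (Set.mem_Iic.2 hj.le) (Set.mem_Iic.2 ht)).1 (hj₁.trans ht₂)
  rcases (by omega : j = t ∨ j + 1 = t ∨ t + 1 = j) with h | rfl | rfl
  · exact Or.inl h
  · exact Or.inr (Or.inl ⟨rfl, by omega⟩)
  · exact Or.inr (Or.inr ⟨rfl, by omega⟩)

theorem exists_segment_of_fenceLe (h : fenceLe α p q) (hpq : p ≠ q) :
    ∃ j < α.length, segStart α j ≤ p ∧ p ≤ segStart α (j + 1) ∧ segStart α j ≤ q ∧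
      q ≤ segStart α (j + 1) ∧ (p < q ↔ j % 2 = 0) := by
  obtain ⟨j, hj, hseg⟩ := h.resolve_left hpq
  refine ⟨j, hj, ?_⟩
  simp only [segStart]
  split_ifs at hseg <;> omega

theorem segPoint_mem (ht : t < α.length) (hi : i ≤ α[t]) :
    segStart α t ≤ segPoint α t i ∧ segPoint α t i ≤ segStart α (t + 1) := by
  have := segStart_succ ht
  unfold segPoint
  split_ifs <;> omega

theorem fenceLe_segPoint (ht : t < α.length) {j : ℕ} (hij : i ≤ j) (hj : j ≤ α[t]) :
    fenceLe α (segPoint α t i) (segPoint α t j) := by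
  have := segStart_succ ht
  refine Or.inr ⟨t, ht, ?_⟩
  simp only [segPoint, segStart] at *
  split_ifs <;> omega

theorem exists_segPoint_of_fenceLe_segPoint (hpos : ∀ x ∈ α, 0 < x) (ht : t < α.length)
    (hi : i < α[t]) (h : fenceLe α p (segPoint α t i)) : ∃ j ≤ i, p = segPoint α t j := by
  by_cases hp : p = segPoint α t i
  · exact ⟨i, le_rfl, hp⟩
  obtain ⟨j, hj, hp₁, hp₂, hx₁, hx₂, hdir⟩ := exists_segment_of_fenceLe h hp
  have hx := segPoint_mem ht hi.le
  have := segStart_succ ht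
  refine ⟨if t % 2 = 0 then p - segStart α t else segStart α (t + 1) - p, ?_⟩
  rcases segStart_overlap hpos hj ht hx₁ hx₂ hx.1 hx.2 with rfl | ⟨rfl, hxe⟩ | ⟨rfl, hxe⟩ <;>
    simp only [segPoint] at * <;> split_ifs at * <;> omega

theorem exists_segPoint_of_segPoint_fenceLe (hpos : ∀ x ∈ α, 0 < x) (ht : t < α.length)
    (hi₀ : 0 < i) (hi : i ≤ α[t]) (h : fenceLe α (segPoint α t i) q) :
    ∃ j, i ≤ j ∧ j ≤ α[t] ∧ q = segPoint α t j := by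
  by_cases hq : segPoint α t i = q
  · exact ⟨i, le_rfl, hi, hq.symm⟩
  obtain ⟨j, hj, hx₁, hx₂, hq₁, hq₂, hdir⟩ := exists_segment_of_fenceLe h hq
  have hx := segPoint_mem ht hi
  have := segStart_succ ht
  refine ⟨if t % 2 = 0 then q - segStart α t else segStart α (t + 1) - q, ?_⟩
  rcases segStart_overlap hpos hj ht hx₁ hx₂ hx.1 hx.2 with rfl | ⟨rfl, hxe⟩ | ⟨rfl, hxe⟩ <;>
    simp only [segPoint] at * <;> split_ifs at * <;> omega

theorem val_segPoint (ht : t < α.length) (hi : i ≤ α[t]) :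
    (Fin.ofNat (α.sum + 1) (segPoint α t i) : ℕ) = segPoint α t i :=
  Nat.mod_eq_of_lt (Nat.lt_succ_of_le ((segPoint_mem ht hi).2.trans (segStart_le_sum _)))

theorem isIsolatedChain_segPoint (hpos : ∀ x ∈ α, 0 < x) (ht : t < α.length) :
    IsIsolatedChain (fun p q : Fin (α.sum + 1) => fenceLe α p q)
      (fun i => Fin.ofNat (α.sum + 1) (segPoint α t i)) α[t] where
  injOn i hi j hj hij := by
    simp only [Set.mem_Iic] at hi hj
    have hval := congrArg Fin.val hij
    rw [val_segPoint ht hi, val_segPoint ht hj] at hval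
    have := segStart_succ ht
    unfold segPoint at hval
    split_ifs at hval <;> omega
  rel_of_le i j hij hj := by
    simp only [val_segPoint ht hj, val_segPoint ht (hij.trans hj)]
    exact fenceLe_segPoint ht hij hj
  below p i hp hi := by
    rw [val_segPoint ht hi.le] at hp
    obtain ⟨j, hj, hpj⟩ := exists_segPoint_of_fenceLe_segPoint hpos ht hi hp
    exact ⟨j, hj, Fin.ext (by rw [hpj, val_segPoint ht (by omega)])⟩
  above q i hq hi₀ hi := by
    rw [val_segPoint ht hi] at hq
    obtain ⟨j, hj, hjt, hqj⟩ := exists_segPoint_of_segPoint_fenceLe hpos ht hi₀ hi hq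
    exact ⟨j, hj, hjt, Fin.ext (by rw [hqj, val_segPoint ht hjt])⟩

end Fence

/-- If some segment of `F(α)` is longer than the sum of the lengths of all the
other segments, then the rank sequence of `L(α)` is unimodal. -/
theorem fence_rank_unimodal_of_long_segment (α : List ℕ) (hpos : ∀ x ∈ α, 0 < x)
    (t : ℕ) (ht : t < α.length)
    (hbig : (α.take t).sum + (α.drop (t + 1)).sum < α.get ⟨t, ht⟩) :
    SeqUnimodal (fenceRk α) := by
  have hsum : α.sum = (α.take t).sum + α[t] + (α.drop (t + 1)).sum := by
    rw [← List.sum_take_succ α t ht, List.sum_take_add_sum_drop]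
  have hlong : Fintype.card (Fin (α.sum + 1)) ≤ 2 * α[t] := by
    rw [Fintype.card_fin]
    change _ < α[t] at hbig
    omega
  exact (isIsolatedChain_segPoint hpos ht).seqUnimodal_downSetCount hlong
end

section
/- If a finite ranked poset P of rank n admits a top centered chain decomposition (every chain C in the decomposition has center n/2 or (n+1)/2), then the rank sequence r₀,…,r_n of P is top interlacing, i.e., r₀ ≤ r_n ≤ r₁ ≤ r_{n−1} ≤ … ≤ r_{⌈n/2⌉}. -/
/-- `C` is a saturated chain in the poset `P`: it is nonempty, totally ordered,
and consecutive elements of `C` are covering pairs of `P`. -/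
def IsSaturatedChain {P : Type*} [PartialOrder P] (C : Finset P) : Prop :=
  C.Nonempty ∧ (∀ x ∈ C, ∀ y ∈ C, x ≤ y ∨ y ≤ x) ∧
    ∀ x ∈ C, ∀ y ∈ C, x < y → (∀ z ∈ C, ¬(x < z ∧ z < y)) → x ⋖ y

/-- `x` and `y` are the bottom and top elements of the chain `C`. -/
def ChainEnds {P : Type*} [PartialOrder P] (C : Finset P) (x y : P) : Prop :=
  x ∈ C ∧ y ∈ C ∧ (∀ z ∈ C, x ≤ z) ∧ ∀ z ∈ C, z ≤ y

/-- `𝒞` is a chain decomposition of `P`: a partition of `P` into saturated chains. -/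
def IsChainDecomp {P : Type*} [PartialOrder P] (𝒞 : Finset (Finset P)) : Prop :=
  (∀ C ∈ 𝒞, IsSaturatedChain C) ∧
  (∀ C ∈ 𝒞, ∀ D ∈ 𝒞, C ≠ D → Disjoint C D) ∧
  ∀ x : P, ∃ C ∈ 𝒞, x ∈ C

/-- The sequence `a₀,…,a_n` is top interlacing:
`a₀ ≤ a_n ≤ a₁ ≤ a_{n-1} ≤ … ≤ a_{⌈n/2⌉}`. -/
def TopInterlacing (r : ℕ → ℕ) (n : ℕ) : Prop :=
  (∀ i, 2 * i < n → r i ≤ r (n - i)) ∧ ∀ i, 2 * i + 1 < n → r (n - i) ≤ r (i + 1)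

/-- The sequence `a₀,…,a_n` is bottom interlacing:
`a_n ≤ a₀ ≤ a_{n-1} ≤ a₁ ≤ … ≤ a_{⌊n/2⌋}`. -/
def BottomInterlacing (r : ℕ → ℕ) (n : ℕ) : Prop :=
  (∀ i, 2 * i < n → r (n - i) ≤ r i) ∧ ∀ i, 2 * i + 1 < n → r i ≤ r (n - 1 - i)

open Finset

/-!
Each chain of a chain decomposition meets every rank of its range `[ρ x, ρ y]` exactly once,
so `r_j ≤ r_k` as soon as every chain whose range contains `j` also contains `k`: send an
element of rank `j` to the element of rank `k` on its chain. When `ρ x + ρ y ∈ {n, n + 1}`, a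
range containing `i < n - i` contains `n - i`, and one containing `n - i > i + 1` contains `i + 1`.
-/

section SaturatedChain

variable {P : Type*} [PartialOrder P] {C : Finset P}

namespace IsSaturatedChain

theorem le_of_minimal (hC : IsSaturatedChain C) {s : Finset P} (hs : s ⊆ C) {m z : P}
    (hm : Minimal (· ∈ s) m) (hz : z ∈ s) : m ≤ z :=
  (hC.2.1 m (hs hm.1) z (hs hz)).elim id fun h => hm.2 hz h

theorem le_of_maximal (hC : IsSaturatedChain C) {s : Finset P} (hs : s ⊆ C) {m z : P}
    (hm : Maximal (· ∈ s) m) (hz : z ∈ s) : z ≤ m :=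
  (hC.2.1 z (hs hz) m (hs hm.1)).elim id fun h => hm.2 hz h

theorem exists_chainEnds (hC : IsSaturatedChain C) : ∃ x y, ChainEnds C x y := by
  obtain ⟨x, hx⟩ := C.exists_minimal hC.1
  obtain ⟨y, hy⟩ := C.exists_maximal hC.1
  exact ⟨x, y, hx.1, hy.1, fun z => hC.le_of_minimal subset_rfl hx,
    fun z => hC.le_of_maximal subset_rfl hy⟩

theorem exists_covBy_le (hC : IsSaturatedChain C) {u w : P} (hu : u ∈ C) (hw : w ∈ C)
    (huw : u < w) : ∃ m ∈ C, u ⋖ m ∧ m ≤ w := by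
  classical
  obtain ⟨m, hm⟩ := (C.filter (u < ·)).exists_minimal ⟨w, mem_filter.2 ⟨hw, huw⟩⟩
  have hleast : ∀ z ∈ C, u < z → m ≤ z := fun z hz huz =>
    hC.le_of_minimal (filter_subset _ _) hm (mem_filter.2 ⟨hz, huz⟩)
  obtain ⟨hmC, hum⟩ := mem_filter.1 hm.1
  exact ⟨m, hmC, hC.2.2 u hu m hmC hum fun z hz ⟨huz, hzm⟩ => (hleast z hz huz).not_gt hzm,
    hleast w hw huw⟩

variable {ρ : P → ℕ}

theorem rank_strictMonoOn [Finite P] (hC : IsSaturatedChain C)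
    (hcov : ∀ x y : P, x ⋖ y → ρ y = ρ x + 1) : StrictMonoOn ρ (C : Set P) := by
  intro u hu
  induction u using WellFoundedGT.induction with
  | _ u ih =>
    intro w hw huw
    obtain ⟨m, hm, hum, hmw⟩ := hC.exists_covBy_le hu hw huw
    have hρm := hcov u m hum
    rcases hmw.eq_or_lt with rfl | hmw
    · omega
    · have := ih m hum.lt hm hw hmw
      omega

theorem rank_injOn [Finite P] (hC : IsSaturatedChain C)
    (hcov : ∀ x y : P, x ⋖ y → ρ y = ρ x + 1) : Set.InjOn ρ (C : Set P) := by
  intro a ha b hb hab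
  have hmono := hC.rank_strictMonoOn hcov
  rcases hC.2.1 a ha b hb with h | h
  · exact h.eq_or_lt.resolve_right fun hlt => (hmono ha hb hlt).ne hab
  · exact (h.eq_or_lt.resolve_right fun hlt => (hmono hb ha hlt).ne hab.symm).symm

theorem rank_mem_Icc [Finite P] (hC : IsSaturatedChain C)
    (hcov : ∀ x y : P, x ⋖ y → ρ y = ρ x + 1) {x y z : P} (hE : ChainEnds C x y) (hz : z ∈ C) :
    ρ x ≤ ρ z ∧ ρ z ≤ ρ y :=
  have hmono := (hC.rank_strictMonoOn hcov).monotoneOn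
  ⟨hmono hE.1 hz (hE.2.2.1 z hz), hmono hz hE.2.1 (hE.2.2.2 z hz)⟩

theorem exists_rank_eq (hC : IsSaturatedChain C) (hcov : ∀ x y : P, x ⋖ y → ρ y = ρ x + 1)
    {x y : P} (hE : ChainEnds C x y) {k : ℕ} (hxk : ρ x ≤ k) (hky : k ≤ ρ y) :
    ∃ u ∈ C, ρ u = k := by
  induction k, hxk using Nat.le_induction with
  | base => exact ⟨x, hE.1, rfl⟩
  | succ k _ ih =>
    obtain ⟨u, hu, hρu⟩ := ih (by omega)
    have huy : u < y := (hE.2.2.2 u hu).lt_of_ne (by rintro rfl; omega)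
    obtain ⟨m, hm, hum, -⟩ := hC.exists_covBy_le hu hE.2.1 huy
    exact ⟨m, hm, hρu ▸ hcov u m hum⟩

end IsSaturatedChain

theorem IsChainDecomp.card_rank_le [Finite P] {ρ : P → ℕ}
    (hcov : ∀ x y : P, x ⋖ y → ρ y = ρ x + 1) {𝒞 : Finset (Finset P)} (hCD : IsChainDecomp 𝒞)
    {j k : ℕ}
    (h : ∀ C ∈ 𝒞, ∀ x y : P, ChainEnds C x y → ρ x ≤ j → j ≤ ρ y → ρ x ≤ k ∧ k ≤ ρ y) :
    Nat.card {z : P // ρ z = j} ≤ Nat.card {z : P // ρ z = k} := by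
  have hpartner : ∀ z : {z : P // ρ z = j},
      ∃ u : {u : P // ρ u = k}, ∃ C ∈ 𝒞, z.1 ∈ C ∧ u.1 ∈ C := by
    rintro ⟨z, rfl⟩
    obtain ⟨C, hC𝒞, hz⟩ := hCD.2.2 z
    have hC := hCD.1 C hC𝒞
    obtain ⟨x, y, hE⟩ := hC.exists_chainEnds
    obtain ⟨hxz, hzy⟩ := hC.rank_mem_Icc hcov hE hz
    obtain ⟨hxk, hky⟩ := h C hC𝒞 x y hE hxz hzy
    obtain ⟨u, hu, hρu⟩ := hC.exists_rank_eq hcov hE hxk hky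
    exact ⟨⟨u, hρu⟩, C, hC𝒞, hz, hu⟩
  choose f C hC𝒞 hzC hfC using hpartner
  refine Nat.card_le_card_of_injective f fun z z' hff' => ?_
  have hCC' : C z = C z' := by
    by_contra hne
    exact disjoint_left.1 (hCD.2.1 _ (hC𝒞 z) _ (hC𝒞 z') hne) (hfC z) (hff' ▸ hfC z')
  exact Subtype.ext <|
    (hCD.1 _ (hC𝒞 z)).rank_injOn hcov (hzC z) (hCC' ▸ hzC z') (z.2.trans z'.2.symm)

end SaturatedChain

theorem topInterlacing_of_topCentered_CD_general {P : Type*} [Finite P] [PartialOrder P]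
    (ρ : P → ℕ) (hcov : ∀ x y : P, x ⋖ y → ρ y = ρ x + 1)
    (n : ℕ)
    (𝒞 : Finset (Finset P)) (hCD : IsChainDecomp 𝒞)
    (hcen : ∀ C ∈ 𝒞, ∀ x y : P, ChainEnds C x y →
      ρ x + ρ y = n ∨ ρ x + ρ y = n + 1) :
    TopInterlacing (fun k => Nat.card {z : P // ρ z = k}) n :=
  ⟨fun i hi => hCD.card_rank_le hcov fun C hC x y hE _ _ => by
      rcases hcen C hC x y hE with h | h <;> omega,
    fun i hi => hCD.card_rank_le hcov fun C hC x y hE _ _ => by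
      rcases hcen C hC x y hE with h | h <;> omega⟩

/-- If a finite ranked poset `P` of rank `n` (with rank function `ρ`) admits a
top centered chain decomposition (every chain has center `n/2` or `(n+1)/2`,
i.e. the ranks of its endpoints sum to `n` or `n+1`), then the rank sequence
of `P` is top interlacing. -/
theorem topInterlacing_of_topCentered_CD {P : Type*} [Finite P] [PartialOrder P]
    (ρ : P → ℕ) (hcov : ∀ x y : P, x ⋖ y → ρ y = ρ x + 1)
    (hmin : ∀ x : P, IsMin x → ρ x = 0)
    (n : ℕ) (hle : ∀ x, ρ x ≤ n) (hex : ∃ x, ρ x = n)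
    (𝒞 : Finset (Finset P)) (hCD : IsChainDecomp 𝒞)
    (hcen : ∀ C ∈ 𝒞, ∀ x y : P, ChainEnds C x y →
      ρ x + ρ y = n ∨ ρ x + ρ y = n + 1) :
    TopInterlacing (fun k => Nat.card {z : P // ρ z = k}) n :=
  topInterlacing_of_topCentered_CD_general ρ hcov n 𝒞 hCD hcen
end

section
/- For α = (a, b) a composition with two parts, the lattice L(α) of lower order ideals of the fence F(a,b) is isomorphic to (C_{a} × C_{b}) ⊕ {1̂}, the ordinal sum of the product of a chain with a+1 elements and a chain with b+1 elements with a single top element adjoined. -/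
open Polynomial

/-!
An ideal of `F(a,b)` containing the peak `x_{a+1}` contains everything below it, i.e. the whole
fence. Any other ideal has as complement an interval `[x_{i+1}, x_{a+b+1-j}]` around the peak:
it consists of the `i ≤ a` lowest elements of the ascending chain and the `j ≤ b` lowest of the
descending one. Inclusion of such ideals is reverse inclusion of the intervals, which is the
componentwise order on `(i, j)`.
-/

lemma fenceLe_pair_iff (a b p q : ℕ) :
    fenceLe [a, b] p q ↔ p = q ∨ (p ≤ q ∧ q ≤ a) ∨ (a ≤ q ∧ q ≤ p ∧ p ≤ a + b) := by
  constructor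
  · rintro (rfl | ⟨j, hj, h⟩)
    · exact .inl rfl
    · simp only [List.length_cons, List.length_nil] at hj
      interval_cases j <;> simp_all
  · rintro (rfl | h | h)
    · exact .inl rfl
    · exact .inr ⟨0, by norm_num, by simpa using h⟩
    · exact .inr ⟨1, by norm_num, by simpa using h⟩

section

variable {a b : ℕ}

open Finset

lemma isFenceIdeal_pair_iff {I : Finset (Fin (a + b + 1))} :
    IsFenceIdeal [a, b] I ↔ ∀ p q : Fin (a + b + 1),
      (p = q ∨ (p ≤ q ∧ (q : ℕ) ≤ a) ∨ (a ≤ (q : ℕ) ∧ q ≤ p)) → q ∈ I → p ∈ I := by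
  change (∀ p q : Fin (a + b + 1), fenceLe [a, b] p q → q ∈ I → p ∈ I) ↔ _
  refine forall₂_congr fun p q => imp_congr_left ?_
  have := p.isLt
  rw [fenceLe_pair_iff, Fin.le_def, Fin.le_def, Fin.val_inj]
  omega

lemma isFenceIdeal_compl_Icc {l u : Fin (a + b + 1)} (hl : (l : ℕ) ≤ a) (hu : a ≤ (u : ℕ)) :
    IsFenceIdeal [a, b] ((Icc l u)ᶜ : Finset (Fin (a + b + 1))) := by
  refine isFenceIdeal_pair_iff.mpr fun p q hpq hq => ?_
  simp only [mem_compl, mem_Icc, Fin.le_def] at hq hpq ⊢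
  omega

lemma IsFenceIdeal.notMem_of_val_eq {I : Finset (Fin (a + b + 1))} (hI : IsFenceIdeal [a, b] I)
    (hne : Iᶜ.Nonempty) {p : Fin (a + b + 1)} (hp : (p : ℕ) = a) : p ∉ I := by
  obtain ⟨q, hq⟩ := hne
  exact fun hpI => mem_compl.mp hq (isFenceIdeal_pair_iff.mp hI q p (by omega) hpI)

lemma IsFenceIdeal.eq_compl_Icc {I : Finset (Fin (a + b + 1))} (hI : IsFenceIdeal [a, b] I)
    (hne : Iᶜ.Nonempty) : I = (Icc (Iᶜ.min' hne) (Iᶜ.max' hne))ᶜ := by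
  have hmin := Iᶜ.min'_mem hne
  have hmax := Iᶜ.max'_mem hne
  rw [mem_compl] at hmin hmax
  ext p
  rw [mem_compl, mem_Icc]
  constructor
  · rintro hp ⟨hlp, hpu⟩
    rcases le_total (p : ℕ) a with h | h
    · exact hmin (isFenceIdeal_pair_iff.mp hI _ p (.inr (.inl ⟨hlp, h⟩)) hp)
    · exact hmax (isFenceIdeal_pair_iff.mp hI _ p (.inr (.inr ⟨h, hpu⟩)) hp)
  · intro hp
    by_contra hpI
    exact hp ⟨min'_le _ _ (mem_compl.mpr hpI), le_max' _ _ (mem_compl.mpr hpI)⟩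

variable (a b)

def peakInterval (x : Fin (a + 1) × Fin (b + 1)) : Finset (Fin (a + b + 1)) :=
  Icc (x.1.castLE (by omega)) (x.2.castLE (by omega)).rev

def pairIdeal : WithTop (Fin (a + 1) × Fin (b + 1)) → Finset (Fin (a + b + 1))
  | ⊤ => univ
  | (x : Fin (a + 1) × Fin (b + 1)) => (peakInterval a b x)ᶜ

variable {a b}

lemma castLE_le_rev_castLE (i : Fin (a + 1)) (j : Fin (b + 1)) :
    (i.castLE (by omega) : Fin (a + b + 1)) ≤ (j.castLE (by omega)).rev := by
  have := i.isLt
  have := j.isLt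
  simp only [Fin.le_def, Fin.val_castLE, Fin.val_rev]
  omega

lemma isFenceIdeal_pairIdeal (x : WithTop (Fin (a + 1) × Fin (b + 1))) :
    IsFenceIdeal [a, b] (pairIdeal a b x) := by
  cases x with
  | top => exact fun p _ _ _ => mem_univ p
  | coe x =>
    have := x.1.isLt
    have := x.2.isLt
    exact isFenceIdeal_compl_Icc (by simp only [Fin.val_castLE]; omega)
      (by simp only [Fin.val_rev, Fin.val_castLE]; omega)

lemma pairIdeal_subset_pairIdeal_iff {x y : WithTop (Fin (a + 1) × Fin (b + 1))} :
    pairIdeal a b x ⊆ pairIdeal a b y ↔ x ≤ y := by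
  cases x with
  | top =>
    cases y with
    | top => simp [pairIdeal]
    | coe y => simpa [pairIdeal, peakInterval] using castLE_le_rev_castLE y.1 y.2
  | coe x =>
    cases y with
    | top => simp [pairIdeal]
    | coe y =>
      simp only [pairIdeal, peakInterval, compl_subset_compl, WithTop.coe_le_coe]
      rw [Icc_subset_Icc_iff (castLE_le_rev_castLE y.1 y.2), Prod.le_def,
        Fin.castLE_le_castLE_iff, Fin.rev_le_rev, Fin.castLE_le_castLE_iff]

lemma IsFenceIdeal.exists_pairIdeal_eq {I : Finset (Fin (a + b + 1))}
    (hI : IsFenceIdeal [a, b] I) : ∃ x, pairIdeal a b x = I := by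
  rcases Iᶜ.eq_empty_or_nonempty with hempty | hne
  · exact ⟨⊤, (compl_eq_empty_iff I).mp hempty ▸ rfl⟩
  · have hpeak : (⟨a, by omega⟩ : Fin (a + b + 1)) ∈ Iᶜ :=
      mem_compl.mpr (hI.notMem_of_val_eq hne rfl)
    have hl : (Iᶜ.min' hne : ℕ) ≤ a := min'_le _ _ hpeak
    have hu : a ≤ (Iᶜ.max' hne : ℕ) := le_max' _ _ hpeak
    have := (Iᶜ.max' hne).isLt
    refine ⟨((⟨Iᶜ.min' hne, by omega⟩, ⟨a + b - Iᶜ.max' hne, by omega⟩) :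
      Fin (a + 1) × Fin (b + 1)), ?_⟩
    refine .trans ?_ (hI.eq_compl_Icc hne).symm
    simp only [pairIdeal, peakInterval]
    congr 2
    ext
    simp only [Fin.val_castLE, Fin.val_rev]
    omega

variable (a b)

def pairIdealEmbedding :
    WithTop (Fin (a + 1) × Fin (b + 1)) ↪o {I : Finset (Fin (a + b + 1)) // IsFenceIdeal [a, b] I} :=
  OrderEmbedding.ofMapLEIff (fun x => ⟨pairIdeal a b x, isFenceIdeal_pairIdeal x⟩)
    fun _ _ => pairIdeal_subset_pairIdeal_iff

lemma pairIdealEmbedding_surjective : Function.Surjective (pairIdealEmbedding a b) :=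
  fun ⟨_, hI⟩ => (hI.exists_pairIdeal_eq).imp fun _ hx => Subtype.ext hx

end

theorem fence_two_segments_iso_general (a b : ℕ) :
    Nonempty ({I : Finset (Fin (([a, b] : List ℕ).sum + 1)) // IsFenceIdeal [a, b] I} ≃o
      WithTop (Fin (a + 1) × Fin (b + 1))) :=
  ⟨(OrderIso.ofSurjective _ (pairIdealEmbedding_surjective a b)).symm⟩

/-- For a two-part composition `α = (a,b)`, the lattice `L(α)` of lower order
ideals of the fence `F(a,b)` is isomorphic to the ordinal sum
`(C_a × C_b) ⊕ {1̂}`, where `C_a` and `C_b` are chains with `a+1` and `b+1`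
elements; adjoining a new top element is `WithTop`. -/
theorem fence_two_segments_iso (a b : ℕ) (ha : 0 < a) (hb : 0 < b) :
    Nonempty ({I : Finset (Fin (([a, b] : List ℕ).sum + 1)) // IsFenceIdeal [a, b] I} ≃o
      WithTop (Fin (a + 1) × Fin (b + 1))) :=
  fence_two_segments_iso_general a b
end
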